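/- arXiv:1803.05583 — 7 statements merged into one kernel-verified Lean document; each statement's English description precedes it below -/
import Mathlib

section
/- Let a ∈ ℝ, b > 0, and let the family (μ^(k)) be in the uniform Nevai class M^(U)(a,b). Then for every regular summation method S with weights σ_{n,k}, the family (μ^(k)) is in the mean Nevai class M^(S)(Σ_{la,lb}) with Σ_{la,lb} = a^{la} b^{lb} for all la, lb ∈ ℕ, and for every bounded continuous function f : ℝ → ℝ one has lim_{n→∞} Σ_{k=0}^n σ_{n,k} ∫_ℝ f(x) (p_k^(n−k)(x))² dμ^(n−k)(x) = (1/π) ∫_{a−2b}^{a+2b} f(x) / √(4b² − (x−a)²) dx. In particular the limit measure depends only on a and b and not on S. -/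
/-
Orthonormality and the three-term recurrence give `∫ x ^ m (p_k)² dμ = (J ^ m)_{kk}`, where `J` is
the Jacobi matrix of the recurrence coefficients. This entry only involves coefficients with
indices in `[k - m, k + m]`; in the uniform Nevai class these are close to `a` and `b` for large
`k`, uniformly in the measure, so `(J ^ m)_{kk}` is uniformly close to the same entry of the free
Jacobi matrix with constant coefficients `a, b, b, …`. Expanding `(a + 2b cos θ) ^ m` in
`cos (iθ)` by the same recurrence identifies that entry as `(1/π) ∫₀^π (a + 2b cos θ) ^ m dθ`.
A regular summation method preserves limits that are uniform in the measure index (Toeplitz), so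
the averaged moments converge to these arcsine moments. The supports lie in a fixed interval
(which also bounds the coefficients), so Weierstrass approximation passes from polynomials to
continuous `f`, and the substitution `x = a + 2b cos θ` produces the arcsine density.
-/
open Filter MeasureTheory

open Finset Function Topology Real Polynomial

structure IsRegularSummation (σ : ℕ → ℕ → ℝ) : Prop where
  nonneg : ∀ n k, k ≤ n → 0 ≤ σ n k
  sum_eq_one : ∀ n, ∑ k ∈ range (n + 1), σ n k = 1
  tendsto_zero : ∀ k, Tendsto (fun n => σ n k) atTop (𝓝 0)

theorem tendsto_uncurry_top_prod_atTop_iff {G : ℕ → ℕ → ℝ} {L : ℝ} :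
    Tendsto (uncurry G) (⊤ ×ˢ atTop) (𝓝 L) ↔
      ∀ ε > 0, ∃ N, ∀ k, N ≤ k → ∀ j, |G j k - L| ≤ ε := by
  rw [Metric.tendsto_nhds]
  constructor
  · intro h ε hε
    obtain ⟨pa, hpa, pb, hpb, hp⟩ := eventually_prod_iff.1 (h ε hε)
    obtain ⟨N, hN⟩ := eventually_atTop.1 hpb
    exact ⟨N, fun k hk j => (hp (eventually_top.1 hpa j) (hN k hk)).le⟩
  · intro h ε hε
    obtain ⟨N, hN⟩ := h (ε / 2) (half_pos hε)
    exact ((eventually_ge_atTop N).prod_inr ⊤).mono fun q hq =>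
      (hN q.2 hq q.1).trans_lt (half_lt_self hε)

namespace IsRegularSummation

variable {σ : ℕ → ℕ → ℝ}

theorem abs_sum_mul_le (hσ : IsRegularSummation σ) {n : ℕ} {x : ℕ → ℝ} {ε : ℝ}
    (hx : ∀ k ≤ n, |x k| ≤ ε) : |∑ k ∈ range (n + 1), σ n k * x k| ≤ ε := by
  calc |∑ k ∈ range (n + 1), σ n k * x k| ≤ ∑ k ∈ range (n + 1), σ n k * ε := by
        refine (abs_sum_le_sum_abs _ _).trans (sum_le_sum fun k hk => ?_)
        have hkn : k ≤ n := Nat.lt_succ_iff.1 (mem_range.1 hk)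
        rw [abs_mul, abs_of_nonneg (hσ.nonneg n k hkn)]
        exact mul_le_mul_of_nonneg_left (hx k hkn) (hσ.nonneg n k hkn)
    _ = ε := by rw [← sum_mul, hσ.sum_eq_one, one_mul]

theorem abs_sum_mul_sub_le (hσ : IsRegularSummation σ) {G : ℕ → ℕ → ℝ} {L M η : ℝ} {n N : ℕ}
    (hNn : N ≤ n + 1) (hM : ∀ j k, |G j k - L| ≤ M) (hη : ∀ k, N ≤ k → ∀ j, |G j k - L| ≤ η) :
    |∑ k ∈ range (n + 1), σ n k * G (n - k) k - L| ≤
      M * ∑ k ∈ range N, σ n k + η * ∑ k ∈ Ico N (n + 1), σ n k := by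
  have hterm : ∀ k ≤ n, ∀ c, |G (n - k) k - L| ≤ c → |σ n k * (G (n - k) k - L)| ≤ c * σ n k :=
    fun k hk c hc => by
      rw [abs_mul, abs_of_nonneg (hσ.nonneg n k hk), mul_comm c]
      exact mul_le_mul_of_nonneg_left hc (hσ.nonneg n k hk)
  have hdiff : ∑ k ∈ range (n + 1), σ n k * G (n - k) k - L =
      ∑ k ∈ range (n + 1), σ n k * (G (n - k) k - L) := by
    simp only [mul_sub, sum_sub_distrib, ← sum_mul, hσ.sum_eq_one, one_mul]
  rw [hdiff, ← sum_range_add_sum_Ico _ hNn, mul_sum, mul_sum]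
  refine (abs_add_le _ _).trans (add_le_add ?_ ?_) <;>
    refine (abs_sum_le_sum_abs _ _).trans (sum_le_sum fun k hk => hterm k ?_ _ ?_)
  · exact Nat.lt_succ_iff.1 (mem_range.1 (range_subset_range.2 hNn hk))
  · exact hM _ _
  · exact Nat.lt_succ_iff.1 (mem_Ico.1 hk).2
  · exact hη k (mem_Ico.1 hk).1 _

/-- Toeplitz's theorem. -/
theorem tendsto_sum_mul (hσ : IsRegularSummation σ) {G : ℕ → ℕ → ℝ} {L M : ℝ}
    (hM : ∀ j k, |G j k| ≤ M) (hG : Tendsto (uncurry G) (⊤ ×ˢ atTop) (𝓝 L)) :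
    Tendsto (fun n => ∑ k ∈ range (n + 1), σ n k * G (n - k) k) atTop (𝓝 L) := by
  rw [Metric.tendsto_atTop]
  intro ε hε
  obtain ⟨N, hN⟩ := tendsto_uncurry_top_prod_atTop_iff.1 hG (ε / 2) (half_pos hε)
  have hM' : ∀ j k, |G j k - L| ≤ M + |L| := fun j k =>
    (abs_sub _ _).trans (by gcongr; exact hM j k)
  have hM'0 : 0 ≤ M + |L| := (abs_nonneg _).trans (hM' 0 0)
  have hhead : Tendsto (fun n => ∑ k ∈ range N, σ n k) atTop (𝓝 0) := by
    simpa using tendsto_finsetSum (range N) fun k _ => hσ.tendsto_zero k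
  obtain ⟨n₀, hn₀⟩ := eventually_atTop.1
    (hhead.eventually (gt_mem_nhds (show (0 : ℝ) < ε / (2 * (M + |L| + 1)) by positivity)))
  refine ⟨max N n₀, fun n hn => ?_⟩
  have hNn : N ≤ n + 1 := by omega
  have hsplit : ∑ k ∈ range N, σ n k + ∑ k ∈ Ico N (n + 1), σ n k = 1 := by
    rw [sum_range_add_sum_Ico _ hNn, hσ.sum_eq_one]
  have hhead_nonneg : 0 ≤ ∑ k ∈ range N, σ n k :=
    sum_nonneg fun k hk => hσ.nonneg n k (by have := mem_range.1 hk; omega)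
  have hhead_small : (M + |L| + 1) * ∑ k ∈ range N, σ n k < ε / 2 :=
    calc (M + |L| + 1) * ∑ k ∈ range N, σ n k < (M + |L| + 1) * (ε / (2 * (M + |L| + 1))) :=
          mul_lt_mul_of_pos_left (hn₀ n (le_of_max_le_right hn)) (by linarith)
      _ = ε / 2 := by field_simp
  rw [Real.dist_eq]
  refine (hσ.abs_sum_mul_sub_le hNn hM' hN).trans_lt ?_
  nlinarith

theorem tendsto_sum_abs_sub_shift (hσ : IsRegularSummation σ) {c : ℕ → ℕ → ℝ} {c₀ K : ℝ}
    (hc : ∀ j n, |c j n| ≤ K) (hU : Tendsto (uncurry c) (⊤ ×ˢ atTop) (𝓝 c₀)) (l : ℕ) :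
    Tendsto (fun n => ∑ k ∈ range (n + 1), σ n k * |c (n - k) (k + l) - c (n - k) k|)
      atTop (𝓝 0) := by
  have hshift : Tendsto (fun q : ℕ × ℕ => c q.1 (q.2 + l)) (⊤ ×ˢ atTop) (𝓝 c₀) :=
    hU.comp (tendsto_id.prodMap (tendsto_add_atTop_nat l))
  refine hσ.tendsto_sum_mul (G := fun j k => |c j (k + l) - c j k|) (M := 2 * K)
    (fun j k => ?_) (by rw [← abs_zero, ← sub_self c₀]; exact (hshift.sub hU).abs)
  rw [abs_abs]
  linarith [abs_sub (c j (k + l)) (c j k), hc j (k + l), hc j k]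

theorem tendsto_sum_pow_mul_pow (hσ : IsRegularSummation σ) {ca cb : ℕ → ℕ → ℝ} {a b K : ℝ}
    (hca : ∀ j n, |ca j n| ≤ K) (hcb : ∀ j n, |cb j n| ≤ K)
    (ha : Tendsto (uncurry ca) (⊤ ×ˢ atTop) (𝓝 a))
    (hb : Tendsto (uncurry cb) (⊤ ×ˢ atTop) (𝓝 b)) (la lb : ℕ) :
    Tendsto (fun n => ∑ k ∈ range (n + 1), σ n k * ca (n - k) k ^ la * cb (n - k) k ^ lb)
      atTop (𝓝 (a ^ la * b ^ lb)) := by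
  simp_rw [mul_assoc]
  refine hσ.tendsto_sum_mul (G := fun j k => ca j k ^ la * cb j k ^ lb) (M := K ^ la * K ^ lb)
    (fun j k => ?_) ((ha.pow la).mul (hb.pow lb))
  rw [abs_mul, abs_pow, abs_pow]
  have hK : 0 ≤ K := (abs_nonneg _).trans (hca 0 0)
  gcongr
  exacts [hca j k, hcb j k]

end IsRegularSummation

theorem abs_mul_sub_mul_le_of_le {x x' y y' K δ E P : ℝ} (hx : |x| ≤ K) (hxx' : |x - x'| ≤ δ)
    (hyy' : |y - y'| ≤ E) (hy' : |y'| ≤ P) : |x * y - x' * y'| ≤ K * E + δ * P := by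
  rw [show x * y - x' * y' = x * (y - y') + (x - x') * y' by ring]
  refine (abs_add_le _ _).trans ?_
  rw [abs_mul, abs_mul]
  exact add_le_add (mul_le_mul hx hyy' (abs_nonneg _) ((abs_nonneg _).trans hx))
    (mul_le_mul hxx' hy' (abs_nonneg _) ((abs_nonneg _).trans hxx'))

/-- `jacobiPow A B k m i` is the entry `(i, k)` of `J ^ m`, where `J` is the doubly infinite
Jacobi matrix with `J i i = A i` and `J (i - 1) i = J i (i - 1) = B i`. -/
def jacobiPow (A B : ℤ → ℝ) (k : ℤ) : ℕ → ℤ → ℝ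
  | 0, i => if i = k then 1 else 0
  | m + 1, i => B (i + 1) * jacobiPow A B k m (i + 1) + A i * jacobiPow A B k m i +
      B i * jacobiPow A B k m (i - 1)

section JacobiPow

variable {A B A' B' : ℤ → ℝ} {K : ℝ}

theorem jacobiPow_one_self (k : ℤ) : jacobiPow A B k 1 k = A k := by
  simp [jacobiPow]

theorem jacobiPow_two_self (k : ℤ) : jacobiPow A B k 2 k = B (k + 1) ^ 2 + A k ^ 2 + B k ^ 2 := by
  simp [jacobiPow, sq, show k + 1 + 1 ≠ k by omega, show k - 1 - 1 ≠ k by omega]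

theorem abs_jacobiPow_le (hA : ∀ i, |A i| ≤ K) (hB : ∀ i, |B i| ≤ K) (k : ℤ) (m : ℕ) (i : ℤ) :
    |jacobiPow A B k m i| ≤ (3 * K) ^ m := by
  induction m generalizing i with
  | zero => simp only [jacobiPow]; split_ifs <;> simp
  | succ m ih =>
    have hK : 0 ≤ K := (abs_nonneg _).trans (hA 0)
    calc |jacobiPow A B k (m + 1) i|
        ≤ |B (i + 1)| * |jacobiPow A B k m (i + 1)| + |A i| * |jacobiPow A B k m i| +
            |B i| * |jacobiPow A B k m (i - 1)| := by
          simp only [jacobiPow, ← abs_mul]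
          exact (abs_add_le _ _).trans (add_le_add_left (abs_add_le _ _) _)
      _ ≤ K * (3 * K) ^ m + K * (3 * K) ^ m + K * (3 * K) ^ m := by
          gcongr <;> first | exact hA _ | exact hB _ | exact ih _
      _ = (3 * K) ^ (m + 1) := by ring

theorem abs_jacobiPow_sub_le (hA : ∀ i, |A i| ≤ K) (hB : ∀ i, |B i| ≤ K)
    (hA' : ∀ i, |A' i| ≤ K) (hB' : ∀ i, |B' i| ≤ K) {δ : ℝ} (k : ℤ) (m : ℕ) (i : ℤ)
    (hclose : ∀ j, |j - i| ≤ m → |A j - A' j| ≤ δ ∧ |B j - B' j| ≤ δ) :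
    |jacobiPow A B k m i - jacobiPow A' B' k m i| ≤ m * δ * (3 * K + 3) ^ m := by
  induction m generalizing i with
  | zero => simp [jacobiPow]
  | succ m ih =>
    have hK : 0 ≤ K := (abs_nonneg _).trans (hA 0)
    have hδ : 0 ≤ δ := (abs_nonneg _).trans (hclose i (by simp; omega)).1
    have hnear : ∀ j, |j - i| ≤ 1 → |A j - A' j| ≤ δ ∧ |B j - B' j| ≤ δ := fun j hj =>
      hclose j (hj.trans (by push_cast; omega))
    have ih' : ∀ j, |j - i| ≤ 1 →
        |jacobiPow A B k m j - jacobiPow A' B' k m j| ≤ m * δ * (3 * K + 3) ^ m := by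
      intro j hj
      refine ih j fun j' hj' => hclose j' ?_
      calc |j' - i| ≤ |j' - j| + |j - i| := abs_sub_le _ _ _
        _ ≤ m + 1 := add_le_add hj' hj
        _ = ((m + 1 : ℕ) : ℤ) := by push_cast; ring
    have hP : ∀ j, |jacobiPow A' B' k m j| ≤ (3 * K + 3) ^ m := fun j =>
      (abs_jacobiPow_le hA' hB' k m j).trans (pow_le_pow_left₀ (by positivity) (by linarith) m)
    calc |jacobiPow A B k (m + 1) i - jacobiPow A' B' k (m + 1) i|
        = |(B (i + 1) * jacobiPow A B k m (i + 1) - B' (i + 1) * jacobiPow A' B' k m (i + 1)) +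
            (A i * jacobiPow A B k m i - A' i * jacobiPow A' B' k m i) +
            (B i * jacobiPow A B k m (i - 1) - B' i * jacobiPow A' B' k m (i - 1))| := by
          simp only [jacobiPow]; ring_nf
      _ ≤ 3 * (K * (m * δ * (3 * K + 3) ^ m) + δ * (3 * K + 3) ^ m) := by
          refine (abs_add_three _ _ _).trans (le_of_le_of_eq (add_le_add_three
            (abs_mul_sub_mul_le_of_le (hB _) (hnear _ (by simp)).2 (ih' _ (by simp)) (hP _))
            (abs_mul_sub_mul_le_of_le (hA _) (hnear _ (by simp)).1 (ih' _ (by simp)) (hP _))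
            (abs_mul_sub_mul_le_of_le (hB _) (hnear _ (by simp)).2 (ih' _ (by simp)) (hP _)))
            (by ring))
      _ ≤ ((m + 1 : ℕ) : ℝ) * δ * (3 * K + 3) ^ (m + 1) := by
          push_cast
          rw [pow_succ]
          have : 0 ≤ δ * (3 * K + 3) ^ m := by positivity
          nlinarith

theorem jacobiPow_const_shift (a b : ℝ) (k : ℤ) (m : ℕ) (i : ℤ) :
    jacobiPow (fun _ => a) (fun _ => b) k m i =
      jacobiPow (fun _ => a) (fun _ => b) 0 m (i - k) := by
  induction m generalizing i with
  | zero => simp [jacobiPow, sub_eq_zero]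
  | succ m ih => simp only [jacobiPow, ih]; ring_nf

end JacobiPow

theorem tendsto_jacobiPow_self {ca cb : ℕ → ℕ → ℝ} {a b K : ℝ} (hca : ∀ j n, |ca j n| ≤ K)
    (hcb : ∀ j n, |cb j n| ≤ K) (ha : |a| ≤ K) (hb : |b| ≤ K)
    (hUa : Tendsto (uncurry ca) (⊤ ×ˢ atTop) (𝓝 a))
    (hUb : Tendsto (uncurry cb) (⊤ ×ˢ atTop) (𝓝 b)) (m : ℕ) :
    Tendsto (uncurry fun j k : ℕ => jacobiPow (fun i => ca j i.toNat) (fun i => cb j i.toNat) k m k)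
      (⊤ ×ˢ atTop) (𝓝 (jacobiPow (fun _ => a) (fun _ => b) 0 m 0)) := by
  rw [tendsto_uncurry_top_prod_atTop_iff] at hUa hUb ⊢
  intro ε hε
  have hK : 0 ≤ K := (abs_nonneg a).trans ha
  set δ := ε / (m * (3 * K + 3) ^ m + 1)
  have hδ : 0 < δ := by positivity
  obtain ⟨Na, hNa⟩ := hUa δ hδ
  obtain ⟨Nb, hNb⟩ := hUb δ hδ
  refine ⟨max Na Nb + m, fun k hk j => ?_⟩
  have hconst : jacobiPow (fun _ => a) (fun _ => b) 0 m 0 =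
      jacobiPow (fun _ => a) (fun _ => b) k m k := by
    rw [jacobiPow_const_shift a b (k : ℤ) m k, sub_self]
  rw [hconst]
  refine (abs_jacobiPow_sub_le (fun i => hca j _) (fun i => hcb j _) (fun _ => ha) (fun _ => hb)
    k m k fun i hi => ⟨hNa _ ?_ j, hNb _ ?_ j⟩).trans ?_
  · have := (abs_le.1 hi).1
    omega
  · have := (abs_le.1 hi).1
    omega
  · calc (m : ℝ) * δ * (3 * K + 3) ^ m ≤ δ * (m * (3 * K + 3) ^ m + 1) := by nlinarith
      _ = ε := div_mul_cancel₀ _ (by positivity)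

theorem integral_cos_intCast_mul (i : ℤ) :
    ∫ θ in (0 : ℝ)..π, cos (i * θ) = if i = 0 then π else 0 := by
  split_ifs with hi
  · simp [hi]
  · rw [intervalIntegral.integral_comp_mul_left (fun θ => cos θ) (Int.cast_ne_zero.2 hi),
      integral_cos, sin_int_mul_pi]
    simp

theorem integral_pow_mul_cos (a b : ℝ) (m : ℕ) (i : ℤ) :
    ∫ θ in (0 : ℝ)..π, (a + 2 * b * cos θ) ^ m * cos (i * θ) =
      π / 2 * (jacobiPow (fun _ => a) (fun _ => b) 0 m i +
        jacobiPow (fun _ => a) (fun _ => b) 0 m (-i)) := by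
  induction m generalizing i with
  | zero =>
    simp only [pow_zero, one_mul, integral_cos_intCast_mul, jacobiPow, neg_eq_zero]
    split_ifs <;> ring
  | succ m ih =>
    -- `2 cos θ cos (iθ) = cos ((i + 1)θ) + cos ((i - 1)θ)` is the constant-coefficient recurrence.
    have hcos : ∀ θ, (a + 2 * b * cos θ) ^ (m + 1) * cos (i * θ) =
        a * ((a + 2 * b * cos θ) ^ m * cos (i * θ)) +
        b * ((a + 2 * b * cos θ) ^ m * cos (((i + 1 : ℤ) : ℝ) * θ)) +
        b * ((a + 2 * b * cos θ) ^ m * cos (((i - 1 : ℤ) : ℝ) * θ)) := by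
      intro θ
      push_cast
      rw [add_mul, sub_mul, one_mul, cos_add, cos_sub]
      ring
    have hint : ∀ (c : ℝ) (j : ℤ), IntervalIntegrable
        (fun θ => c * ((a + 2 * b * cos θ) ^ m * cos (j * θ))) volume 0 π :=
      fun c j => (by fun_prop : Continuous _).intervalIntegrable _ _
    simp_rw [hcos]
    rw [intervalIntegral.integral_add ((hint a i).add (hint b _)) (hint b _),
      intervalIntegral.integral_add (hint a i) (hint b _), intervalIntegral.integral_const_mul,
      intervalIntegral.integral_const_mul, intervalIntegral.integral_const_mul, ih, ih, ih,
      show -(i + 1) = -i - 1 by ring, show -(i - 1) = -i + 1 by ring]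
    simp only [jacobiPow]
    ring

theorem integral_pow_cos (a b : ℝ) (m : ℕ) :
    ∫ θ in (0 : ℝ)..π, (a + 2 * b * cos θ) ^ m = π * jacobiPow (fun _ => a) (fun _ => b) 0 m 0 := by
  have h := integral_pow_mul_cos a b m 0
  simp only [Int.cast_zero, zero_mul, cos_zero, mul_one, neg_zero] at h
  rw [h]
  ring

theorem integral_comp_cos_eq_integral_div_sqrt (a : ℝ) {b : ℝ} (hb : 0 < b) (f : ℝ → ℝ) :
    ∫ θ in (0 : ℝ)..π, f (a + 2 * b * cos θ) =
      ∫ x in (a - 2 * b)..(a + 2 * b), f x / √(4 * b ^ 2 - (x - a) ^ 2) := by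
  have himage : (fun θ => a + 2 * b * cos θ) '' Set.Ioo 0 π = Set.Ioo (a - 2 * b) (a + 2 * b) := by
    ext x
    constructor
    · rintro ⟨θ, ⟨hθ0, hθπ⟩, rfl⟩
      have h1 := cos_lt_cos_of_nonneg_of_le_pi le_rfl hθπ.le hθ0
      have h2 := cos_lt_cos_of_nonneg_of_le_pi hθ0.le le_rfl hθπ
      rw [cos_zero] at h1
      rw [cos_pi] at h2
      constructor <;> nlinarith
    · rintro ⟨hx1, hx2⟩
      have hu1 : -1 < (x - a) / (2 * b) := by rw [lt_div_iff₀ (by positivity)]; linarith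
      have hu2 : (x - a) / (2 * b) < 1 := by rw [div_lt_iff₀ (by positivity)]; linarith
      refine ⟨arccos ((x - a) / (2 * b)), ⟨arccos_pos.2 hu2, arccos_lt_pi.2 hu1⟩, ?_⟩
      show a + 2 * b * cos (arccos _) = x
      rw [cos_arccos hu1.le hu2.le]
      field_simp
      ring
  have hderiv : ∀ θ ∈ Set.Ioo 0 π,
      HasDerivWithinAt (fun θ => a + 2 * b * cos θ) (-(2 * b * sin θ)) (Set.Ioo 0 π) θ :=
    fun θ _ => by
      simpa using (((hasDerivAt_cos θ).const_mul (2 * b)).const_add a).hasDerivWithinAt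
  have hinj : Set.InjOn (fun θ => a + 2 * b * cos θ) (Set.Ioo 0 π) := fun θ₁ h₁ θ₂ h₂ h =>
    injOn_cos (Set.Ioo_subset_Icc_self h₁) (Set.Ioo_subset_Icc_self h₂)
      (mul_left_cancel₀ (by positivity) (add_left_cancel h))
  rw [intervalIntegral.integral_of_le pi_pos.le, intervalIntegral.integral_of_le (by linarith),
    integral_Ioc_eq_integral_Ioo, integral_Ioc_eq_integral_Ioo, ← himage,
    integral_image_eq_integral_abs_deriv_smul measurableSet_Ioo hderiv hinj]
  refine setIntegral_congr_fun measurableSet_Ioo fun θ ⟨hθ0, hθπ⟩ => ?_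
  have hsin : 0 < 2 * b * sin θ := mul_pos (by positivity) (sin_pos_of_pos_of_lt_pi hθ0 hθπ)
  have hsqrt : √(4 * b ^ 2 - (a + 2 * b * cos θ - a) ^ 2) = 2 * b * sin θ := by
    rw [← sqrt_sq hsin.le]
    congr 1
    linear_combination (-(4 * b ^ 2)) * sin_sq_add_cos_sq θ
  simp only [smul_eq_mul, abs_neg, abs_of_pos hsin, hsqrt]
  exact (mul_div_cancel₀ _ hsin.ne').symm

theorem abs_integral_comp_cos_sub_le {a b K ε : ℝ} (hab : |a| + 2 * |b| ≤ K) {g₁ g₂ : ℝ → ℝ}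
    (hg₁ : Continuous g₁) (hg₂ : Continuous g₂) (hg : ∀ x ∈ Set.Icc (-K) K, |g₁ x - g₂ x| ≤ ε) :
    |(1 / π * ∫ θ in (0 : ℝ)..π, g₁ (a + 2 * b * cos θ)) -
      1 / π * ∫ θ in (0 : ℝ)..π, g₂ (a + 2 * b * cos θ)| ≤ ε := by
  have hcos : ∀ θ, a + 2 * b * cos θ ∈ Set.Icc (-K) K := fun θ => by
    refine abs_le.1 (le_trans ?_ hab)
    calc |a + 2 * b * cos θ| ≤ |a| + 2 * |b| * |cos θ| := by
          simpa [abs_mul] using abs_add_le a (2 * b * cos θ)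
      _ ≤ |a| + 2 * |b| := by nlinarith [abs_nonneg b, abs_cos_le_one θ]
  have hI := intervalIntegral.norm_integral_le_of_norm_le_const (a := 0) (b := π) (C := ε)
    (f := fun θ => g₁ (a + 2 * b * cos θ) - g₂ (a + 2 * b * cos θ)) fun θ _ => hg _ (hcos θ)
  rw [Real.norm_eq_abs, sub_zero, abs_of_pos pi_pos, intervalIntegral.integral_sub
    ((by fun_prop : Continuous fun θ => g₁ (a + 2 * b * cos θ)).intervalIntegrable _ _)
    ((by fun_prop : Continuous fun θ => g₂ (a + 2 * b * cos θ)).intervalIntegrable _ _)] at hI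
  rw [← mul_sub, abs_mul, abs_of_pos (by positivity : 0 < 1 / π)]
  calc 1 / π * |(∫ θ in (0 : ℝ)..π, g₁ (a + 2 * b * cos θ)) -
        ∫ θ in (0 : ℝ)..π, g₂ (a + 2 * b * cos θ)| ≤ 1 / π * (ε * π) := by gcongr
    _ = ε := by field_simp

theorem Continuous.integrable_of_ae_mem_Icc {E : Type*} [NormedAddCommGroup E] {μ : Measure ℝ}
    [IsFiniteMeasureOnCompacts μ] {f : ℝ → E} {c d : ℝ} (hf : Continuous f)
    (hμ : ∀ᵐ x ∂μ, x ∈ Set.Icc c d) : Integrable f μ := by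
  rw [← Measure.restrict_eq_self_of_ae_mem hμ]
  exact hf.integrableOn_Icc

theorem abs_integral_mul_le {α : Type*} [MeasurableSpace α] {μ : Measure α} {s : Set α}
    (hμ : ∀ᵐ x ∂μ, x ∈ s) {f φ : α → ℝ} {ε : ℝ} (hφ : Integrable φ μ) (hφ0 : ∀ x, 0 ≤ φ x)
    (hf : ∀ x ∈ s, |f x| ≤ ε) : |∫ x, f x * φ x ∂μ| ≤ ε * ∫ x, φ x ∂μ := by
  rw [← integral_const_mul ε, ← Real.norm_eq_abs]
  refine norm_integral_le_of_norm_le (hφ.const_mul ε) (hμ.mono fun x hx => ?_)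
  rw [Real.norm_eq_abs, abs_mul, abs_of_nonneg (hφ0 x)]
  exact mul_le_mul_of_nonneg_right (hf x hx) (hφ0 x)

theorem integral_eval_mul_eq_sum {μ : Measure ℝ} {φ : ℝ → ℝ}
    (hφ : ∀ i, Integrable (fun x => x ^ i * φ x) μ) (q : ℝ[X]) :
    ∫ x, q.eval x * φ x ∂μ = ∑ i ∈ range (q.natDegree + 1), q.coeff i * ∫ x, x ^ i * φ x ∂μ := by
  simp_rw [eval_eq_sum_range, sum_mul, mul_assoc]
  rw [integral_finsetSum _ fun i _ => (hφ i).const_mul _]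
  simp_rw [integral_const_mul]

theorem tendsto_of_tendsto_polynomial {u : ℕ → (ℝ → ℝ) → ℝ} {Λ : (ℝ → ℝ) → ℝ} {c d : ℝ}
    (hu : ∀ n f g ε, Continuous f → Continuous g → (∀ x ∈ Set.Icc c d, |f x - g x| ≤ ε) →
      |u n f - u n g| ≤ ε)
    (hΛ : ∀ f g ε, Continuous f → Continuous g → (∀ x ∈ Set.Icc c d, |f x - g x| ≤ ε) →
      |Λ f - Λ g| ≤ ε)
    (hpoly : ∀ q : ℝ[X], Tendsto (fun n => u n fun x => q.eval x) atTop (𝓝 (Λ fun x => q.eval x)))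
    {f : ℝ → ℝ} (hf : Continuous f) : Tendsto (fun n => u n f) atTop (𝓝 (Λ f)) := by
  rw [Metric.tendsto_atTop]
  intro ε hε
  obtain ⟨q, hq⟩ :=
    exists_polynomial_near_of_continuousOn c d f hf.continuousOn (ε / 3) (by positivity)
  have hqf : ∀ x ∈ Set.Icc c d, |q.eval x - f x| ≤ ε / 3 := fun x hx => (hq x hx).le
  obtain ⟨N, hN⟩ := Metric.tendsto_atTop.1 (hpoly q) (ε / 3) (by positivity)
  refine ⟨N, fun n hn => ?_⟩
  have h1 := abs_le.1 (hu n _ _ _ q.continuous hf hqf)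
  have h2 := abs_le.1 (hΛ _ _ _ q.continuous hf hqf)
  have h3 := abs_lt.1 (hN n hn)
  rw [Real.dist_eq, abs_lt]
  constructor <;> linarith [h1.1, h1.2, h2.1, h2.2, h3.1, h3.2]

theorem integral_eval_eq_jacobiPow {μ : Measure ℝ} {P : ℤ → ℝ[X]} {A B : ℤ → ℝ} {k : ℤ}
    (hint : ∀ q : ℝ[X], Integrable (fun x => q.eval x) μ)
    (horth : ∀ i, ∫ x, (P i * P k).eval x ∂μ = if i = k then 1 else 0)
    (hrec : ∀ i, X * P i = C (B (i + 1)) * P (i + 1) + C (A i) * P i + C (B i) * P (i - 1))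
    (m : ℕ) (i : ℤ) : ∫ x, (X ^ m * P i * P k).eval x ∂μ = jacobiPow A B k m i := by
  induction m generalizing i with
  | zero => simpa [jacobiPow] using horth i
  | succ m ih =>
    have hpoly : X ^ (m + 1) * P i * P k = C (B (i + 1)) * (X ^ m * P (i + 1) * P k) +
        C (A i) * (X ^ m * P i * P k) + C (B i) * (X ^ m * P (i - 1) * P k) := by
      rw [pow_succ, mul_assoc (X ^ m), hrec]
      ring
    simp only [hpoly, eval_add, eval_C_mul]
    have hI : ∀ (c : ℝ) (q : ℝ[X]), Integrable (fun x => c * q.eval x) μ :=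
      fun c q => (hint q).const_mul c
    rw [integral_add _ (hI _ _), integral_add (hI _ _) (hI _ _), integral_const_mul,
      integral_const_mul, integral_const_mul, ih, ih, ih]
    · rfl
    · exact (hI _ _).add (hI _ _)

def extendByZero {M : Type*} [Zero M] (p : ℕ → M) (i : ℤ) : M := if 0 ≤ i then p i.toNat else 0

section ExtendByZero

variable {M : Type*} [Zero M] (p : ℕ → M)

@[simp] theorem extendByZero_natCast (n : ℕ) : extendByZero p n = p n := by
  simp [extendByZero]

theorem extendByZero_of_neg {i : ℤ} (hi : i < 0) : extendByZero p i = 0 := by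
  simp [extendByZero, not_le.2 hi]

end ExtendByZero

structure IsOrthonormalRecurrence (μ : Measure ℝ) (p : ℕ → ℝ[X]) (ca cb : ℕ → ℝ) : Prop where
  orthonormal : ∀ l m, ∫ x, (p l).eval x * (p m).eval x ∂μ = if l = m then 1 else 0
  cb_zero : cb 0 = 0
  X_mul : ∀ l, X * p l = C (cb (l + 1)) * p (l + 1) + C (ca l) * p l + C (cb l) * p (l - 1)

namespace IsOrthonormalRecurrence

variable {μ : Measure ℝ} {p : ℕ → ℝ[X]} {ca cb : ℕ → ℝ}

/-- The recurrence on `ℤ`: below index `0` everything vanishes because `cb 0 = 0`. -/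
theorem X_mul_extendByZero (h : IsOrthonormalRecurrence μ p ca cb) (i : ℤ) :
    X * extendByZero p i = C (cb (i + 1).toNat) * extendByZero p (i + 1) +
      C (ca i.toNat) * extendByZero p i + C (cb i.toNat) * extendByZero p (i - 1) := by
  rcases lt_or_ge i 0 with hi | hi
  · have hlow : C (cb (i + 1).toNat) * extendByZero p (i + 1) = 0 := by
      rcases lt_or_eq_of_le (show i + 1 ≤ 0 by omega) with hi' | hi'
      · rw [extendByZero_of_neg p hi', mul_zero]
      · rw [hi', Int.toNat_zero, h.cb_zero, C_0, zero_mul]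
    rw [hlow, extendByZero_of_neg p hi, extendByZero_of_neg p (by omega)]
    simp
  · lift i to ℕ using hi
    rcases i with _ | n
    · simpa [extendByZero, h.cb_zero] using h.X_mul 0
    · have h1 : ((n + 1 : ℕ) : ℤ) + 1 = ((n + 2 : ℕ) : ℤ) := by push_cast; ring
      have h2 : ((n + 1 : ℕ) : ℤ) - 1 = (n : ℤ) := by push_cast; ring
      rw [h1, h2, Int.toNat_natCast, Int.toNat_natCast, extendByZero_natCast, extendByZero_natCast,
        extendByZero_natCast, h.X_mul (n + 1)]
      rfl

theorem integral_extendByZero (h : IsOrthonormalRecurrence μ p ca cb) (i : ℤ) (k : ℕ) :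
    ∫ x, (extendByZero p i * extendByZero p k).eval x ∂μ = if i = k then 1 else 0 := by
  rcases lt_or_ge i 0 with hi | hi
  · rw [extendByZero_of_neg p hi, if_neg (by omega)]
    simp
  · lift i to ℕ using hi
    simpa using h.orthonormal i k

theorem integral_pow_mul_sq (h : IsOrthonormalRecurrence μ p ca cb)
    (hint : ∀ q : ℝ[X], Integrable (fun x => q.eval x) μ) (k m : ℕ) :
    ∫ x, x ^ m * (p k).eval x ^ 2 ∂μ =
      jacobiPow (fun i => ca i.toNat) (fun i => cb i.toNat) k m k := by
  have hmom := integral_eval_eq_jacobiPow (P := extendByZero p) (A := fun i => ca i.toNat)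
    (B := fun i => cb i.toNat) (k := k) hint (fun i => h.integral_extendByZero i k)
    h.X_mul_extendByZero m k
  simpa [sq, mul_assoc] using hmom

theorem integral_sq_eq_one (h : IsOrthonormalRecurrence μ p ca cb) (k : ℕ) :
    ∫ x, (p k).eval x ^ 2 ∂μ = 1 := by
  simpa [sq] using h.orthonormal k k

theorem abs_integral_pow_mul_sq_le (h : IsOrthonormalRecurrence μ p ca cb)
    (hint : ∀ q : ℝ[X], Integrable (fun x => q.eval x) μ) {K : ℝ}
    (hμ : ∀ᵐ x ∂μ, x ∈ Set.Icc (-K) K) (k m : ℕ) :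
    |∫ x, x ^ m * (p k).eval x ^ 2 ∂μ| ≤ K ^ m := by
  simpa [h.integral_sq_eq_one] using abs_integral_mul_le hμ
    ((hint (p k ^ 2)).congr (ae_of_all _ fun x => eval_pow 2))
    (fun x => sq_nonneg ((p k).eval x)) fun x hx =>
      (abs_pow x m).trans_le (pow_le_pow_left₀ (abs_nonneg x) (abs_le.2 hx) m)

theorem abs_ca_le (h : IsOrthonormalRecurrence μ p ca cb)
    (hint : ∀ q : ℝ[X], Integrable (fun x => q.eval x) μ) {K : ℝ}
    (hμ : ∀ᵐ x ∂μ, x ∈ Set.Icc (-K) K) (l : ℕ) : |ca l| ≤ K := by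
  have h1 := h.abs_integral_pow_mul_sq_le hint hμ l 1
  rw [h.integral_pow_mul_sq hint, jacobiPow_one_self] at h1
  simpa using h1

theorem abs_cb_le (h : IsOrthonormalRecurrence μ p ca cb)
    (hint : ∀ q : ℝ[X], Integrable (fun x => q.eval x) μ) {K : ℝ} (hK : 0 ≤ K)
    (hμ : ∀ᵐ x ∂μ, x ∈ Set.Icc (-K) K) (l : ℕ) : |cb l| ≤ K := by
  rcases l with _ | l
  · rwa [h.cb_zero, abs_zero]
  have h2 := h.abs_integral_pow_mul_sq_le hint hμ l 2
  rw [h.integral_pow_mul_sq hint, jacobiPow_two_self, Int.toNat_natCast,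
    show ((l : ℤ) + 1).toNat = l + 1 by omega] at h2
  refine abs_le_of_sq_le_sq ?_ hK
  nlinarith [le_of_abs_le h2, sq_nonneg (ca l), sq_nonneg (cb l)]

end IsOrthonormalRecurrence

namespace IsRegularSummation

variable {σ : ℕ → ℕ → ℝ} {μ : ℕ → Measure ℝ} {p : ℕ → ℕ → ℝ[X]}

theorem abs_sum_integral_mul_sq_sub_le (hσ : IsRegularSummation σ)
    (hint : ∀ j (f : ℝ → ℝ), Continuous f → Integrable f (μ j)) {K : ℝ}
    (hμ : ∀ j, ∀ᵐ x ∂μ j, x ∈ Set.Icc (-K) K) (hnorm : ∀ j k, ∫ x, (p j k).eval x ^ 2 ∂μ j = 1)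
    (n : ℕ) {g₁ g₂ : ℝ → ℝ} {ε : ℝ} (hg₁ : Continuous g₁) (hg₂ : Continuous g₂)
    (hg : ∀ x ∈ Set.Icc (-K) K, |g₁ x - g₂ x| ≤ ε) :
    |∑ k ∈ range (n + 1), σ n k * ∫ x, g₁ x * (p (n - k) k).eval x ^ 2 ∂μ (n - k) -
      ∑ k ∈ range (n + 1), σ n k * ∫ x, g₂ x * (p (n - k) k).eval x ^ 2 ∂μ (n - k)| ≤ ε := by
  simp only [← sum_sub_distrib, ← mul_sub]
  refine hσ.abs_sum_mul_le fun k _ => ?_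
  rw [← integral_sub (hint _ _ (by fun_prop)) (hint _ _ (by fun_prop))]
  simp only [← sub_mul]
  simpa [hnorm] using abs_integral_mul_le (hμ (n - k)) (hint _ _ (by fun_prop))
    (fun x => sq_nonneg ((p (n - k) k).eval x)) hg

theorem tendsto_sum_integral_pow_mul_sq (hσ : IsRegularSummation σ) {ca cb : ℕ → ℕ → ℝ}
    (hsys : ∀ j, IsOrthonormalRecurrence (μ j) (p j) (ca j) (cb j))
    (hint : ∀ j (q : ℝ[X]), Integrable (fun x => q.eval x) (μ j)) {K a b : ℝ}
    (hμ : ∀ j, ∀ᵐ x ∂μ j, x ∈ Set.Icc (-K) K) (ha : |a| ≤ K) (hb : |b| ≤ K)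
    (hUa : Tendsto (uncurry ca) (⊤ ×ˢ atTop) (𝓝 a))
    (hUb : Tendsto (uncurry cb) (⊤ ×ˢ atTop) (𝓝 b)) (m : ℕ) :
    Tendsto (fun n => ∑ k ∈ range (n + 1), σ n k * ∫ x, x ^ m * (p (n - k) k).eval x ^ 2 ∂μ (n - k))
      atTop (𝓝 (jacobiPow (fun _ => a) (fun _ => b) 0 m 0)) := by
  have hca : ∀ j n, |ca j n| ≤ K := fun j => (hsys j).abs_ca_le (hint j) (hμ j)
  have hcb : ∀ j n, |cb j n| ≤ K := fun j =>
    (hsys j).abs_cb_le (hint j) ((abs_nonneg a).trans ha) (hμ j)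
  simp_rw [(hsys _).integral_pow_mul_sq (hint _)]
  exact hσ.tendsto_sum_mul
    (G := fun j k => jacobiPow (fun l => ca j l.toNat) (fun l => cb j l.toNat) k m k)
    (fun j k => abs_jacobiPow_le (fun _ => hca j _) (fun _ => hcb j _) _ _ _)
    (tendsto_jacobiPow_self hca hcb ha hb hUa hUb m)

theorem tendsto_sum_integral_mul_sq (hσ : IsRegularSummation σ) {ca cb : ℕ → ℕ → ℝ}
    (hsys : ∀ j, IsOrthonormalRecurrence (μ j) (p j) (ca j) (cb j))
    (hint : ∀ j (f : ℝ → ℝ), Continuous f → Integrable f (μ j))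
    {K : ℝ} (hμ : ∀ j, ∀ᵐ x ∂μ j, x ∈ Set.Icc (-K) K) {a b : ℝ} (hab : |a| + 2 * |b| ≤ K)
    (ha : Tendsto (uncurry ca) (⊤ ×ˢ atTop) (𝓝 a)) (hb : Tendsto (uncurry cb) (⊤ ×ˢ atTop) (𝓝 b))
    {f : ℝ → ℝ} (hf : Continuous f) :
    Tendsto (fun n => ∑ k ∈ range (n + 1), σ n k * ∫ x, f x * (p (n - k) k).eval x ^ 2 ∂μ (n - k))
      atTop (𝓝 (1 / π * ∫ θ in (0 : ℝ)..π, f (a + 2 * b * cos θ))) := by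
  refine tendsto_of_tendsto_polynomial (c := -K) (d := K)
    (u := fun n g => ∑ k ∈ range (n + 1), σ n k * ∫ x, g x * (p (n - k) k).eval x ^ 2 ∂μ (n - k))
    (Λ := fun g => 1 / π * ∫ θ in (0 : ℝ)..π, g (a + 2 * b * cos θ))
    (fun n _ _ _ hg₁ hg₂ hg => hσ.abs_sum_integral_mul_sq_sub_le hint hμ
      (fun j => (hsys j).integral_sq_eq_one) n hg₁ hg₂ hg)
    (fun _ _ _ hg₁ hg₂ hg => abs_integral_comp_cos_sub_le hab hg₁ hg₂ hg) (fun q => ?_) hf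
  have hφ : ∀ j k i, Integrable (fun x => x ^ i * (p j k).eval x ^ 2) (μ j) :=
    fun j k i => hint j _ (by fun_prop)
  have hu : ∀ n, ∑ k ∈ range (n + 1), σ n k * ∫ x, q.eval x * (p (n - k) k).eval x ^ 2 ∂μ (n - k) =
      ∑ i ∈ range (q.natDegree + 1), q.coeff i *
        ∑ k ∈ range (n + 1), σ n k * ∫ x, x ^ i * (p (n - k) k).eval x ^ 2 ∂μ (n - k) := fun n => by
    simp_rw [integral_eval_mul_eq_sum (hφ _ _) q, mul_sum]
    rw [sum_comm]
    simp_rw [mul_left_comm]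
  have hΛ : 1 / π * ∫ θ in (0 : ℝ)..π, q.eval (a + 2 * b * cos θ) =
      ∑ i ∈ range (q.natDegree + 1), q.coeff i * jacobiPow (fun _ => a) (fun _ => b) 0 i 0 := by
    simp_rw [eval_eq_sum_range]
    rw [intervalIntegral.integral_finsetSum fun i _ =>
      (by fun_prop : Continuous _).intervalIntegrable _ _, mul_sum]
    refine sum_congr rfl fun i _ => ?_
    rw [intervalIntegral.integral_const_mul, integral_pow_cos]
    field_simp
  simp_rw [hu, hΛ]
  exact tendsto_finsetSum _ fun i _ => (hσ.tendsto_sum_integral_pow_mul_sq hsys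
    (fun j q => hint j _ q.continuous) hμ (by linarith [abs_nonneg b])
    (by linarith [abs_nonneg a, abs_nonneg b]) ha hb i).const_mul _

end IsRegularSummation

theorem stmt2_general
    (μ : ℕ → MeasureTheory.Measure ℝ)
    (hfin : ∀ k, MeasureTheory.IsFiniteMeasure (μ k))
    (hsupp : ∃ R : ℝ, ∀ k, μ k ((Set.Icc (-R) R)ᶜ) = 0)
    (p : ℕ → ℕ → Polynomial ℝ) (ca cb : ℕ → ℕ → ℝ)
    (horth : ∀ k l m, (∫ x, (p k l).eval x * (p k m).eval x ∂ (μ k)) = if l = m then 1 else 0)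
    (hb0 : ∀ k, cb k 0 = 0)
    (hrec : ∀ k l, Polynomial.X * p k l =
      Polynomial.C (cb k (l+1)) * p k (l+1) + Polynomial.C (ca k l) * p k l +
      Polynomial.C (cb k l) * p k (l-1))
    (σ : ℕ → ℕ → ℝ)
    (hσ0 : ∀ n k, k ≤ n → 0 ≤ σ n k)
    (hσ1 : ∀ n, ∑ k ∈ Finset.range (n+1), σ n k = 1)
    (hσ2 : ∀ k, Filter.Tendsto (fun n => σ n k) Filter.atTop (nhds 0))
    (a₀ b₀ : ℝ) (hb₀ : 0 < b₀)
    (hUa : ∀ ε : ℝ, 0 < ε → ∃ N₀ : ℕ, ∀ n, N₀ ≤ n → ∀ k, |ca k n - a₀| ≤ ε)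
    (hUb : ∀ ε : ℝ, 0 < ε → ∃ N₀ : ℕ, ∀ n, N₀ ≤ n → ∀ k, |cb k n - b₀| ≤ ε)
    :
    ((∃ A : ℝ, ∀ k n, |ca k n| ≤ A) ∧ (∃ B : ℝ, ∀ k n, cb k n ≤ B) ∧
      (∀ l : ℕ, 1 ≤ l → Filter.Tendsto
        (fun n => ∑ k ∈ Finset.range (n+1), σ n k * |ca (n-k) (k+l) - ca (n-k) k|)
        Filter.atTop (nhds 0)) ∧
      (∀ l : ℕ, 1 ≤ l → Filter.Tendsto
        (fun n => ∑ k ∈ Finset.range (n+1), σ n k * |cb (n-k) (k+l) - cb (n-k) k|)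
        Filter.atTop (nhds 0)) ∧
      (∀ la lb : ℕ, Filter.Tendsto
        (fun n => ∑ k ∈ Finset.range (n+1), σ n k * (ca (n-k) k)^la * (cb (n-k) k)^lb)
        Filter.atTop (nhds (a₀^la * b₀^lb)))) ∧
    (∀ f : ℝ → ℝ, Continuous f → (∃ C : ℝ, ∀ x, |f x| ≤ C) →
      Filter.Tendsto (fun n => ∑ k ∈ Finset.range (n+1),
          σ n k * ∫ x, f x * ((p (n-k) k).eval x)^2 ∂ (μ (n-k)))
          Filter.atTop
        (nhds ((1 / Real.pi) * ∫ x in (a₀ - 2*b₀)..(a₀ + 2*b₀),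
          f x / Real.sqrt (4*b₀^2 - (x - a₀)^2)))) := by
  obtain ⟨R, hR⟩ := hsupp
  set K := max R (|a₀| + 2 * |b₀|)
  have hK : 0 ≤ K := (by positivity : (0 : ℝ) ≤ |a₀| + 2 * |b₀|).trans (le_max_right _ _)
  have hσ : IsRegularSummation σ := ⟨hσ0, hσ1, hσ2⟩
  have hsys : ∀ j, IsOrthonormalRecurrence (μ j) (p j) (ca j) (cb j) :=
    fun j => ⟨horth j, hb0 j, hrec j⟩
  have hμ : ∀ j, ∀ᵐ x ∂μ j, x ∈ Set.Icc (-K) K := fun j =>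
    Filter.Eventually.mono (mem_ae_iff.2 (hR j)) fun x hx =>
      Set.Icc_subset_Icc (neg_le_neg (le_max_left _ _)) (le_max_left _ _) hx
  have hint : ∀ j (f : ℝ → ℝ), Continuous f → Integrable f (μ j) := fun j f hf =>
    haveI := hfin j
    hf.integrable_of_ae_mem_Icc (hμ j)
  have hca : ∀ j n, |ca j n| ≤ K := fun j =>
    (hsys j).abs_ca_le (fun q => hint j _ q.continuous) (hμ j)
  have hcb : ∀ j n, |cb j n| ≤ K := fun j =>
    (hsys j).abs_cb_le (fun q => hint j _ q.continuous) hK (hμ j)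
  have ha := tendsto_uncurry_top_prod_atTop_iff.2 hUa
  have hb := tendsto_uncurry_top_prod_atTop_iff.2 hUb
  refine ⟨⟨⟨K, hca⟩, ⟨K, fun j n => le_of_abs_le (hcb j n)⟩,
    fun l _ => hσ.tendsto_sum_abs_sub_shift hca ha l,
    fun l _ => hσ.tendsto_sum_abs_sub_shift hcb hb l,
    hσ.tendsto_sum_pow_mul_pow hca hcb ha hb⟩, fun f hf _ => ?_⟩
  rw [← integral_comp_cos_eq_integral_div_sqrt a₀ hb₀]
  exact hσ.tendsto_sum_integral_mul_sq hsys hint hμ (le_max_right _ _) ha hb hf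

theorem stmt2
    (μ : ℕ → MeasureTheory.Measure ℝ)
    (hfin : ∀ k, MeasureTheory.IsFiniteMeasure (μ k))
    (hsupp : ∃ R : ℝ, ∀ k, μ k ((Set.Icc (-R) R)ᶜ) = 0)
    (p : ℕ → ℕ → Polynomial ℝ) (ca cb : ℕ → ℕ → ℝ)
    (hdeg : ∀ k l, (p k l).natDegree = l)
    (hlead : ∀ k l, 0 < (p k l).leadingCoeff)
    (horth : ∀ k l m, (∫ x, (p k l).eval x * (p k m).eval x ∂ (μ k)) = if l = m then 1 else 0)
    (hb0 : ∀ k, cb k 0 = 0)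
    (hbpos : ∀ k l, 0 < cb k (l+1))
    (hrec : ∀ k l, Polynomial.X * p k l =
      Polynomial.C (cb k (l+1)) * p k (l+1) + Polynomial.C (ca k l) * p k l +
      Polynomial.C (cb k l) * p k (l-1))
    (σ : ℕ → ℕ → ℝ)
    (hσ0 : ∀ n k, k ≤ n → 0 ≤ σ n k)
    (hσ1 : ∀ n, ∑ k ∈ Finset.range (n+1), σ n k = 1)
    (hσ2 : ∀ k, Filter.Tendsto (fun n => σ n k) Filter.atTop (nhds 0))
    (a₀ b₀ : ℝ) (hb₀ : 0 < b₀)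
    (hUa : ∀ ε : ℝ, 0 < ε → ∃ N₀ : ℕ, ∀ n, N₀ ≤ n → ∀ k, |ca k n - a₀| ≤ ε)
    (hUb : ∀ ε : ℝ, 0 < ε → ∃ N₀ : ℕ, ∀ n, N₀ ≤ n → ∀ k, |cb k n - b₀| ≤ ε)
    :
    ((∃ A : ℝ, ∀ k n, |ca k n| ≤ A) ∧ (∃ B : ℝ, ∀ k n, cb k n ≤ B) ∧
      (∀ l : ℕ, 1 ≤ l → Filter.Tendsto
        (fun n => ∑ k ∈ Finset.range (n+1), σ n k * |ca (n-k) (k+l) - ca (n-k) k|)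
        Filter.atTop (nhds 0)) ∧
      (∀ l : ℕ, 1 ≤ l → Filter.Tendsto
        (fun n => ∑ k ∈ Finset.range (n+1), σ n k * |cb (n-k) (k+l) - cb (n-k) k|)
        Filter.atTop (nhds 0)) ∧
      (∀ la lb : ℕ, Filter.Tendsto
        (fun n => ∑ k ∈ Finset.range (n+1), σ n k * (ca (n-k) k)^la * (cb (n-k) k)^lb)
        Filter.atTop (nhds (a₀^la * b₀^lb)))) ∧
    (∀ f : ℝ → ℝ, Continuous f → (∃ C : ℝ, ∀ x, |f x| ≤ C) →
      Filter.Tendsto (fun n => ∑ k ∈ Finset.range (n+1),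
          σ n k * ∫ x, f x * ((p (n-k) k).eval x)^2 ∂ (μ (n-k)))
          Filter.atTop
        (nhds ((1 / Real.pi) * ∫ x in (a₀ - 2*b₀)..(a₀ + 2*b₀),
          f x / Real.sqrt (4*b₀^2 - (x - a₀)^2)))) :=
  stmt2_general μ hfin hsupp p ca cb horth hb0 hrec σ hσ0 hσ1 hσ2 a₀ b₀ hb₀ hUa hUb
end

section
/- Let S be a regular Nörlund summation method with weights σ_{n,k} = τ_n σ_{n−k}, τ_n = (Σ_{j=0}^n σ_j)^{−1} > 0, and set N_n = τ_n Σ_{k=0}^n 1/τ_k, τ_{n,k} = τ_n/(N_n τ_k). Then for every family (μ^(k)) with orthonormal polynomials p_l^(k), every n ∈ ℕ, and every bounded measurable function f : ℝ → ℝ, one has the exact rearrangement identity (1/N_n) Σ_{k=0}^n σ_{n,k} ∫_ℝ f(x) K_k^(n−k)(x,x) dμ^(n−k)(x) = Σ_{k=0}^n τ_{n,k} ( Σ_{j=0}^k σ_{k,j} ∫_ℝ f(x) (p_j^(k−j)(x))² dμ^(k−j)(x) ); that is, λ_n = Σ_{k=0}^n τ_{n,k} μ̄_k as measures. -/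
open Filter MeasureTheory

lemma tri (n : ℕ) (g : ℕ → ℕ → ℝ) :
    ∑ k ∈ Finset.range (n+1), ∑ l ∈ Finset.range (k+1), g (n-k) l
    = ∑ k ∈ Finset.range (n+1), ∑ j ∈ Finset.range (k+1), g (k-j) j := by
  induction n with
  | zero => simp
  | succ n ih =>
    rw [Finset.sum_range_succ'
      (fun k => ∑ l ∈ Finset.range (k+1), g (n+1-k) l) (n+1)]
    rw [Finset.sum_range_succ
      (fun k => ∑ j ∈ Finset.range (k+1), g (k-j) j) (n+1)]
    rw [Finset.sum_range_succ'
      (fun j => g (n+1-j) j) (n+1)]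
    simp only [Nat.succ_sub_succ, Nat.sub_zero]
    have h1 : ∀ k, ∑ l ∈ Finset.range (k+1+1), g (n-k) l
        = (∑ l ∈ Finset.range (k+1), g (n-k) l) + g (n-k) (k+1) := by
      intro k; rw [Finset.sum_range_succ]
    rw [Finset.sum_congr rfl (fun k _ => h1 k), Finset.sum_add_distrib, ih]
    simp [Finset.sum_range_one]
    ring

theorem stmt5
    (μ : ℕ → MeasureTheory.Measure ℝ)
    (hfin : ∀ k, MeasureTheory.IsFiniteMeasure (μ k))
    (hsupp : ∃ R : ℝ, ∀ k, μ k ((Set.Icc (-R) R)ᶜ) = 0)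
    (p : ℕ → ℕ → Polynomial ℝ) (ca cb : ℕ → ℕ → ℝ)
    (hdeg : ∀ k l, (p k l).natDegree = l)
    (hlead : ∀ k l, 0 < (p k l).leadingCoeff)
    (horth : ∀ k l m, (∫ x, (p k l).eval x * (p k m).eval x ∂ (μ k)) = if l = m then 1 else 0)
    (hb0 : ∀ k, cb k 0 = 0)
    (hbpos : ∀ k l, 0 < cb k (l+1))
    (hrec : ∀ k l, Polynomial.X * p k l =
      Polynomial.C (cb k (l+1)) * p k (l+1) + Polynomial.C (ca k l) * p k l +
      Polynomial.C (cb k l) * p k (l-1))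
    (σ : ℕ → ℕ → ℝ)
    (hσ0 : ∀ n k, k ≤ n → 0 ≤ σ n k)
    (hσ1 : ∀ n, ∑ k ∈ Finset.range (n+1), σ n k = 1)
    (hσ2 : ∀ k, Filter.Tendsto (fun n => σ n k) Filter.atTop (nhds 0))
    (σs : ℕ → ℝ) (hσs : ∀ j, 0 ≤ σs j)
    (τ : ℕ → ℝ) (hτ : ∀ n, τ n = (∑ j ∈ Finset.range (n+1), σs j)⁻¹)
    (hτpos : ∀ n, 0 < τ n)
    (hfac : ∀ n k, k ≤ n → σ n k = τ n * σs (n-k))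
    (N : ℕ → ℝ) (hN : ∀ n, N n = τ n * ∑ k ∈ Finset.range (n+1), (τ k)⁻¹)
    :
    ∀ n : ℕ, ∀ f : ℝ → ℝ, Measurable f → (∃ C : ℝ, ∀ x, |f x| ≤ C) →
      (1 / N n) * ∑ k ∈ Finset.range (n+1),
        σ n k * ∫ x, f x * (∑ l ∈ Finset.range (k+1), ((p (n-k) l).eval x)^2) ∂ (μ (n-k))
      = ∑ k ∈ Finset.range (n+1), (τ n / (N n * τ k)) *
          ∑ j ∈ Finset.range (k+1),
            σ k j * ∫ x, f x * ((p (k-j) j).eval x)^2 ∂ (μ (k-j)) := by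
  intro n f hf hbd
  obtain ⟨C, hC⟩ := hbd
  obtain ⟨R, hR⟩ := hsupp
  -- integrability of f * q^2 against each μ k
  have hint : ∀ k (q : Polynomial ℝ),
      Integrable (fun x => f x * (q.eval x)^2) (μ k) := by
    intro k q
    haveI := hfin k
    obtain ⟨M, hM⟩ := (isCompact_Icc (a := -|R|) (b := |R|)).exists_bound_of_continuousOn
      (Continuous.continuousOn ((q.continuous).pow 2))
    have hnull : μ k ((Set.Icc (-|R|) |R|)ᶜ) = 0 := by
      refine measure_mono_null ?_ (hR k)
      apply Set.compl_subset_compl.mpr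
      exact Set.Icc_subset_Icc (by simp [neg_le, neg_abs_le, le_abs_self]) (le_abs_self R)
    have hae : ∀ᵐ x ∂ (μ k), x ∈ Set.Icc (-|R|) (|R|) := by
      rw [MeasureTheory.ae_iff]
      exact hnull
    refine Integrable.mono' (integrable_const (C * M)) ?_ ?_
    · exact (hf.mul ((q.continuous.pow 2).measurable)).aestronglyMeasurable
    · filter_upwards [hae] with x hx
      have h1 : |f x| ≤ C := hC x
      have h2 : ‖(q.eval x)^2‖ ≤ M := hM x hx
      calc ‖f x * (q.eval x)^2‖ = |f x| * ‖(q.eval x)^2‖ := by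
            rw [norm_mul]; rfl
        _ ≤ C * M := mul_le_mul h1 h2 (norm_nonneg _) ((abs_nonneg _).trans h1)
  -- positivity of N n
  have hNpos : 0 < N n := by
    rw [hN]
    exact mul_pos (hτpos n) (Finset.sum_pos
      (fun k _ => inv_pos.mpr (hτpos k)) (by simp))
  have hNne : N n ≠ 0 := ne_of_gt hNpos
  -- abbreviation
  set I : ℕ → ℕ → ℝ := fun m l => ∫ x, f x * ((p m l).eval x)^2 ∂ (μ m) with hI
  -- expand the integrals on the LHS
  have hexp : ∀ k, (∫ x, f x * (∑ l ∈ Finset.range (k+1), ((p (n-k) l).eval x)^2) ∂ (μ (n-k)))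
      = ∑ l ∈ Finset.range (k+1), I (n-k) l := by
    intro k
    rw [hI]
    rw [show (fun x => f x * (∑ l ∈ Finset.range (k+1), ((p (n-k) l).eval x)^2))
        = fun x => ∑ l ∈ Finset.range (k+1), f x * ((p (n-k) l).eval x)^2 by
      funext x; rw [Finset.mul_sum]]
    exact MeasureTheory.integral_finset_sum _ (fun l _ => hint (n-k) (p (n-k) l))
  -- LHS
  have hL : (1 / N n) * ∑ k ∈ Finset.range (n+1),
      σ n k * ∫ x, f x * (∑ l ∈ Finset.range (k+1), ((p (n-k) l).eval x)^2) ∂ (μ (n-k))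
      = (τ n / N n) * ∑ k ∈ Finset.range (n+1),
          ∑ l ∈ Finset.range (k+1), σs (n-k) * I (n-k) l := by
    rw [Finset.mul_sum, Finset.mul_sum]
    refine Finset.sum_congr rfl (fun k hk => ?_)
    have hkn : k ≤ n := Nat.lt_succ_iff.mp (Finset.mem_range.mp hk)
    rw [hexp k, hfac n k hkn, ← Finset.mul_sum]
    field_simp
  -- RHS
  have hRs : ∑ k ∈ Finset.range (n+1), (τ n / (N n * τ k)) *
      ∑ j ∈ Finset.range (k+1), σ k j * ∫ x, f x * ((p (k-j) j).eval x)^2 ∂ (μ (k-j))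
      = (τ n / N n) * ∑ k ∈ Finset.range (n+1),
          ∑ j ∈ Finset.range (k+1), σs (k-j) * I (k-j) j := by
    rw [Finset.mul_sum]
    refine Finset.sum_congr rfl (fun k _ => ?_)
    have hτk : τ k ≠ 0 := ne_of_gt (hτpos k)
    have : ∑ j ∈ Finset.range (k+1), σ k j * ∫ x, f x * ((p (k-j) j).eval x)^2 ∂ (μ (k-j))
        = τ k * ∑ j ∈ Finset.range (k+1), σs (k-j) * I (k-j) j := by
      rw [Finset.mul_sum]
      refine Finset.sum_congr rfl (fun j hj => ?_)
      have hjk : j ≤ k := Nat.lt_succ_iff.mp (Finset.mem_range.mp hj)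
      rw [hfac k j hjk, hI]
      ring
    rw [this]
    field_simp
  rw [hL, hRs]
  congr 1
  exact tri n (fun m l => σs m * I m l)
end

section
/- For every real λ > −1/2 and every integer m ≥ 1, lim_{n→∞} (1/(n+1)) Σ_{k=0}^n ( k(2n − k + 2λ − 1) / (4(n+λ−1)(n+λ)) )^m = Γ(3/2) Γ(m+1) / (4^m Γ(m + 3/2)). (Equivalently, the limit equals 2^{−2m−1} ∫_{−1}^1 (1−x²)^m dx.) -/
/-!
With `x = k / n` the summand is `(aₙ x (2 - x + eₙ) / 4) ^ m` with `aₙ → 1` and `eₙ → 0`, so it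
converges to `f x = (x (2 - x) / 4) ^ m` uniformly on `[0, 1]`, and the Cesàro mean has the same
limit as the Riemann sums of `f`, namely `∫₀¹ f`; as `f` is monotone on `[0, 1]`, those sums are
squeezed between the integral comparison bounds. Finally `x (2 - x) / 4 = (x/2)(1 - x/2)`, so by
the symmetry `y ↦ 1 - y` the integral is the Beta integral `B(m+1, m+1) = Γ(m+1)² / Γ(2m+2)`,
which Legendre's duplication formula turns into `Γ(3/2) Γ(m+1) / (4^m Γ(m+3/2))`.
-/

open Filter MeasureTheory Set Topology

lemma Continuous.tendstoUniformlyOn_of_tendsto {α β γ E : Type*} [TopologicalSpace α]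
    [TopologicalSpace β] [UniformSpace E] {f : α → β → E} (hf : Continuous f.uncurry)
    {k : Set β} (hk : IsCompact k) {l : Filter γ} {p : γ → α} {q : α}
    (hp : Tendsto p l (𝓝 q)) :
    TendstoUniformlyOn (fun i ↦ f (p i)) (f q) l k := by
  intro u hu
  obtain ⟨v, hv, hvu⟩ :=
    hk.mem_uniformity_of_prod hf.continuousOn (mem_univ q) (symm_le_uniformity hu)
  rw [nhdsWithin_univ] at hv
  filter_upwards [hp hv] with i hi x hx
  exact hvu _ hi x hx

lemma tendsto_mul_add_div_add_one (a c : ℝ) :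
    Tendsto (fun n : ℕ ↦ (n * a + c) / (n + 1)) atTop (𝓝 a) := by
  have h := (tendsto_one_div_add_atTop_nhds_zero_nat.const_mul (c - a)).const_add a
  rw [mul_zero, add_zero] at h
  refine h.congr fun n ↦ ?_
  field_simp
  ring

lemma tendsto_sq_div_add_mul_add (a b : ℝ) :
    Tendsto (fun n : ℕ ↦ (n : ℝ) ^ 2 / ((n + a) * (n + b))) atTop (𝓝 1) := by
  have h := ((tendsto_inv_atTop_nhds_zero_nat (𝕜 := ℝ)).const_mul a |>.const_add 1).mul
    ((tendsto_inv_atTop_nhds_zero_nat (𝕜 := ℝ)).const_mul b |>.const_add 1) |>.inv₀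
    (by norm_num)
  simp only [mul_zero, add_zero, mul_one, inv_one] at h
  refine h.congr' ?_
  filter_upwards [eventually_ne_atTop 0] with n hn
  have : (n : ℝ) ≠ 0 := by exact_mod_cast hn
  field_simp

noncomputable def riemannMean (f : ℝ → ℝ) (n : ℕ) : ℝ :=
  (1 / ((n : ℝ) + 1)) * ∑ k ∈ Finset.range (n + 1), f (k / n)

lemma riemannMean_sub (f g : ℝ → ℝ) (n : ℕ) :
    riemannMean f n - riemannMean g n = riemannMean (f - g) n := by
  simp only [riemannMean, Pi.sub_apply, Finset.sum_sub_distrib, mul_sub]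

lemma natCast_div_mem_Icc {k n : ℕ} (hk : k ≤ n) : (k / n : ℝ) ∈ Icc 0 1 :=
  ⟨by positivity, div_le_one_of_le₀ (by exact_mod_cast hk) n.cast_nonneg⟩

lemma abs_riemannMean_le {f : ℝ → ℝ} {C : ℝ} (hf : ∀ x ∈ Icc (0 : ℝ) 1, |f x| ≤ C) (n : ℕ) :
    |riemannMean f n| ≤ C := by
  calc |riemannMean f n| ≤ (1 / ((n : ℝ) + 1)) * ∑ k ∈ Finset.range (n + 1), |f (k / n)| := by
        rw [riemannMean, abs_mul, abs_of_pos (by positivity)]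
        gcongr
        exact Finset.abs_sum_le_sum_abs _ _
    _ ≤ (1 / ((n : ℝ) + 1)) * ∑ k ∈ Finset.range (n + 1), C := by
        gcongr with k hk
        exact hf _ (natCast_div_mem_Icc (Nat.lt_succ_iff.mp (Finset.mem_range.mp hk)))
    _ = C := by
        rw [Finset.sum_const, Finset.card_range, nsmul_eq_mul]; push_cast; field_simp

lemma TendstoUniformlyOn.tendsto_riemannMean_sub {F : ℕ → ℝ → ℝ} {f : ℝ → ℝ}
    (h : TendstoUniformlyOn F f atTop (Icc 0 1)) :
    Tendsto (fun n ↦ riemannMean (F n) n - riemannMean f n) atTop (𝓝 0) := by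
  rw [Metric.tendsto_nhds]
  intro ε hε
  filter_upwards [Metric.tendstoUniformlyOn_iff.mp h (ε / 2) (half_pos hε)] with n hn
  rw [dist_zero_right, Real.norm_eq_abs, riemannMean_sub]
  refine (abs_riemannMean_le (fun x hx ↦ ?_) n).trans_lt (half_lt_self hε)
  rw [Pi.sub_apply, ← Real.dist_eq, dist_comm]
  exact (hn x hx).le

lemma tendsto_riemannMean_of_monotoneOn {f : ℝ → ℝ} (hf : MonotoneOn f (Icc 0 1)) :
    Tendsto (riemannMean f) atTop (𝓝 (∫ x in 0..1, f x)) := by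
  set I := ∫ x in 0..1, f x
  have bounds : ∀ n : ℕ, 1 ≤ n → (n * I + f 0) / (n + 1) ≤ riemannMean f n ∧
      riemannMean f n ≤ (n * I + f 1) / (n + 1) := by
    intro n hn
    have hn0 : (n : ℝ) ≠ 0 := by positivity
    have hpos : (0 : ℝ) < n := by positivity
    have hmaps : ∀ t ∈ Icc (0 : ℝ) (0 + n), t / n ∈ Icc (0 : ℝ) 1 := fun t ht ↦
      ⟨div_nonneg ht.1 hpos.le, div_le_one_of_le₀ (by linarith [ht.2]) hpos.le⟩
    have hg : MonotoneOn (fun t ↦ f (t / n)) (Icc 0 (0 + n)) := fun s hs t ht hst ↦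
      hf (hmaps s hs) (hmaps t ht) (div_le_div_of_nonneg_right hst hpos.le)
    have hint : ∫ t in (0:ℝ)..0 + n, f (t / n) = n * I := by
      rw [zero_add, intervalIntegral.integral_comp_div _ hn0, zero_div, div_self hn0, smul_eq_mul]
    have lower := hg.sum_le_integral
    have upper := hg.integral_le_sum
    rw [hint] at lower upper
    simp only [zero_add] at lower upper
    have hS₁ := Finset.sum_range_succ (fun k : ℕ ↦ f (k / n)) n
    have hS₂ := Finset.sum_range_succ' (fun k : ℕ ↦ f (k / n)) n
    rw [div_self hn0] at hS₁
    simp only [Nat.cast_zero, zero_div] at hS₂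
    rw [riemannMean, one_div_mul_eq_div, div_le_div_iff_of_pos_right (by positivity),
      div_le_div_iff_of_pos_right (by positivity)]
    push_cast at upper hS₂
    constructor <;> linarith
  exact tendsto_of_tendsto_of_tendsto_of_le_of_le' (tendsto_mul_add_div_add_one I (f 0))
    (tendsto_mul_add_div_add_one I (f 1))
    (eventually_atTop.mpr ⟨1, fun n hn ↦ (bounds n hn).1⟩)
    (eventually_atTop.mpr ⟨1, fun n hn ↦ (bounds n hn).2⟩)

lemma integral_comp_div_two_of_symm {h : ℝ → ℝ} (hsymm : ∀ x, h (1 - x) = h x)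
    (hint : IntervalIntegrable h volume 0 1) :
    ∫ x in 0..1, h (x / 2) = ∫ x in 0..1, h x := by
  have hreflect : ∫ x in (1/2 : ℝ)..1, h x = ∫ x in (0 : ℝ)..1/2, h x := by
    have := intervalIntegral.integral_comp_sub_left (a := (0 : ℝ)) (b := 1/2) h 1
    simp only [hsymm] at this
    norm_num at this ⊢
    exact this.symm
  have hsub : ∀ c ∈ Icc (0 : ℝ) 1, ∀ d ∈ Icc (0 : ℝ) 1, IntervalIntegrable h volume c d :=
    fun c hc d hd ↦ hint.mono_set
      (uIcc_subset_uIcc (by rwa [uIcc_of_le zero_le_one]) (by rwa [uIcc_of_le zero_le_one]))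
  calc ∫ x in 0..1, h (x / 2) = 2 * ∫ x in (0 : ℝ)..1/2, h x := by
        rw [intervalIntegral.integral_comp_div _ two_ne_zero, smul_eq_mul, zero_div]
    _ = (∫ x in (0 : ℝ)..1/2, h x) + ∫ x in (1/2 : ℝ)..1, h x := by rw [hreflect]; ring
    _ = ∫ x in 0..1, h x := intervalIntegral.integral_add_adjacent_intervals
          (hsub 0 (by norm_num) _ (by norm_num)) (hsub _ (by norm_num) 1 (by norm_num))

lemma integral_pow_mul_one_sub_pow (a b : ℕ) :
    ∫ x in (0 : ℝ)..1, x ^ a * (1 - x) ^ b = ProbabilityTheory.beta (a + 1) (b + 1) := by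
  rw [ProbabilityTheory.beta_eq_betaIntegralReal _ _ (by positivity) (by positivity),
    Complex.betaIntegral]
  have hcast : ∫ x : ℝ in 0..1,
        (x : ℂ) ^ (((a + 1 : ℝ) : ℂ) - 1) * (1 - (x : ℂ)) ^ (((b + 1 : ℝ) : ℂ) - 1)
      = ((∫ x in (0 : ℝ)..1, x ^ a * (1 - x) ^ b : ℝ) : ℂ) := by
    rw [← intervalIntegral.integral_ofReal]
    refine intervalIntegral.integral_congr fun x _ ↦ ?_
    push_cast
    simp only [add_sub_cancel_right, Complex.cpow_natCast]
  rw [hcast, Complex.ofReal_re]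

lemma beta_nat_add_one_self (m : ℕ) : ProbabilityTheory.beta (m + 1) (m + 1) =
    Real.Gamma (3 / 2) * Real.Gamma (m + 1) / (4 ^ m * Real.Gamma (m + 3 / 2)) := by
  have hdup := Real.Gamma_mul_Gamma_add_half ((m : ℝ) + 1)
  rw [show (m : ℝ) + 1 + 1/2 = m + 3/2 by ring, show 2 * ((m : ℝ) + 1) = m + 1 + (m + 1) by ring]
    at hdup
  have h32 : Real.Gamma (3/2) = √Real.pi / 2 := by
    rw [show (3/2 : ℝ) = 1/2 + 1 by norm_num, Real.Gamma_add_one (by norm_num),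
      Real.Gamma_one_half_eq]
    ring
  have hpow : (2 : ℝ) ^ (1 - ((m : ℝ) + 1 + (m + 1))) * 4 ^ m * 2 = 1 := by
    have h4 : (4 : ℝ) ^ m * 2 = (2 : ℝ) ^ ((2 * m + 1 : ℕ) : ℝ) := by
      rw [Real.rpow_natCast, pow_succ, pow_mul]
      norm_num
    rw [mul_assoc, h4, ← Real.rpow_add two_pos]
    push_cast
    ring_nf
    exact Real.rpow_zero 2
  have hG1 := Real.Gamma_pos_of_pos (show (0 : ℝ) < m + 1 by positivity)
  have hG2 := Real.Gamma_pos_of_pos (show (0 : ℝ) < m + 1 + (m + 1) by positivity)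
  have hG3 := Real.Gamma_pos_of_pos (show (0 : ℝ) < m + 3/2 by positivity)
  rw [ProbabilityTheory.beta, h32, div_eq_div_iff hG2.ne' (by positivity)]
  linear_combination Real.Gamma ((m : ℝ) + 1) * 4 ^ m * hdup
    + Real.Gamma ((m : ℝ) + 1) * Real.Gamma ((m : ℝ) + 1 + (m + 1)) * √Real.pi / 2 * hpow

lemma monotoneOn_mul_two_sub_div_four_pow (m : ℕ) :
    MonotoneOn (fun x : ℝ ↦ (x * (2 - x) / 4) ^ m) (Icc 0 1) := by
  intro x hx y hy hxy
  exact pow_le_pow_left₀ (by nlinarith [hx.1, hx.2]) (by nlinarith [hx.1, hy.2]) m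

lemma integral_mul_two_sub_div_four_pow (m : ℕ) :
    ∫ x in (0 : ℝ)..1, (x * (2 - x) / 4) ^ m =
      Real.Gamma (3 / 2) * Real.Gamma (m + 1) / (4 ^ m * Real.Gamma (m + 3 / 2)) := by
  have hscale : ∀ x : ℝ, (x * (2 - x) / 4) ^ m = (x / 2) ^ m * (1 - x / 2) ^ m := fun x ↦ by
    rw [← mul_pow]; ring
  simp_rw [hscale]
  rw [integral_comp_div_two_of_symm (h := fun y ↦ y ^ m * (1 - y) ^ m)
      (fun y ↦ by simp only [sub_sub_cancel]; ring)
      ((by fun_prop : Continuous _).intervalIntegrable _ _),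
    integral_pow_mul_one_sub_pow, beta_nat_add_one_self]

theorem stmt9_general (lam : ℝ) (m : ℕ) :
    Filter.Tendsto (fun n : ℕ => (1/((n:ℝ)+1)) * ∑ k ∈ Finset.range (n+1),
      (((k:ℝ) * (2*(n:ℝ) - (k:ℝ) + 2*lam - 1)) / (4*((n:ℝ)+lam-1)*((n:ℝ)+lam)))^m)
      Filter.atTop
      (nhds (Real.Gamma (3/2) * Real.Gamma ((m:ℝ)+1) / (4^m * Real.Gamma ((m:ℝ)+3/2)))) := by
  -- With `x = k / n`, the `k`-th summand is `Φ (q n) x`.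
  let Φ : ℝ × ℝ → ℝ → ℝ := fun q x ↦ (q.1 * (x * (2 - x + q.2)) / 4) ^ m
  let q : ℕ → ℝ × ℝ := fun n ↦ ((n : ℝ) ^ 2 / ((n + (lam - 1)) * (n + lam)), (2 * lam - 1) / n)
  have hq : Tendsto q atTop (𝓝 (1, 0)) :=
    (tendsto_sq_div_add_mul_add _ _).prodMk_nhds (tendsto_const_div_atTop_nhds_zero_nat _)
  have hunif : TendstoUniformlyOn (fun n ↦ Φ (q n)) (Φ (1, 0)) atTop (Icc 0 1) :=
    (by fun_prop : Continuous Φ.uncurry).tendstoUniformlyOn_of_tendsto isCompact_Icc hq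
  have hΦ : Φ (1, 0) = fun x ↦ (x * (2 - x) / 4) ^ m := by
    funext x; simp only [Φ, one_mul, add_zero]
  have hmean := tendsto_riemannMean_of_monotoneOn (monotoneOn_mul_two_sub_div_four_pow m)
  rw [integral_mul_two_sub_div_four_pow, ← hΦ] at hmean
  have hlim := hunif.tendsto_riemannMean_sub.add hmean
  simp only [sub_add_cancel, zero_add] at hlim
  refine hlim.congr' ?_
  filter_upwards [eventually_ne_atTop 0] with n hn
  have hn' : (n : ℝ) ≠ 0 := by exact_mod_cast hn
  simp only [riemannMean, Φ, q]
  refine congrArg _ (Finset.sum_congr rfl fun k _ ↦ congrArg (· ^ m) ?_)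
  field_simp
  ring

theorem stmt9 (lam : ℝ) (hlam : -(1/2) < lam) (m : ℕ) (hm : 1 ≤ m) :
    Filter.Tendsto (fun n : ℕ => (1/((n:ℝ)+1)) * ∑ k ∈ Finset.range (n+1),
      (((k:ℝ) * (2*(n:ℝ) - (k:ℝ) + 2*lam - 1)) / (4*((n:ℝ)+lam-1)*((n:ℝ)+lam)))^m)
      Filter.atTop
      (nhds (Real.Gamma (3/2) * Real.Gamma ((m:ℝ)+1) / (4^m * Real.Gamma ((m:ℝ)+3/2)))) :=
  stmt9_general lam m
end

section
/- For every real α > 0, every real λ > −1/2, and every integer m ≥ 1, lim_{n→∞} Σ_{k=0}^n [ α Γ(n−k+α) Γ(n+1) / ( Γ(n−k+1) Γ(n+α+1) ) ] · ( k(2n − k + 2λ − 1) / (4(n+λ−1)(n+λ)) )^m = Γ(α/2 + 1) Γ(m+1) / (4^m Γ(α/2 + m + 1)). -/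
open Filter MeasureTheory

/-!
Put `j = n - k` and `μ = λ - 1/2`. Since `k (2n - k + 2λ - 1) = (n + μ)² - (j + μ)²`, the sum is the
Cesàro mean of a polynomial in `j`. The Cesàro weights have exact falling-factorial moments
`∑ⱼ σ · j^(p) = α/(α+p) · n^(p)`, so the mean of a polynomial of degree `≤ k` is
`α/(α+k)` times its `k`-th coefficient times `n^k`, up to `o(n^k)`. Expanding
`((n + μ)² - (j + μ)²)^m` binomially, the limit is `4^{-m} ∑ᵢ (-1)^i (m choose i) α/(α+2i)`,
which the partial-fraction identity `∑ᵢ (-1)^i (m choose i)/(x+i) = Γ(x) m!/Γ(x+m+1)` evaluates.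
-/

open Topology Polynomial Finset

/-- The Cesàro `(C,α)` mean `∑ₖ σ_{n,k}^(C,α) f(n - k)`, written in the reflected index `j = n - k`. -/
noncomputable def cesaroMean (α : ℝ) (n : ℕ) (f : ℕ → ℝ) : ℝ :=
  ∑ j ∈ range (n + 1), α * Real.Gamma (j + α) * Real.Gamma (n + 1) /
    (Real.Gamma (j + 1) * Real.Gamma (n + α + 1)) * f j

theorem cesaroMean_eq_mul_sum (α : ℝ) (n : ℕ) (f : ℕ → ℝ) :
    cesaroMean α n f = α * Real.Gamma (n + 1) / Real.Gamma (n + α + 1) *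
      ∑ j ∈ range (n + 1), Real.Gamma (j + α) / Real.Gamma (j + 1) * f j := by
  rw [cesaroMean, mul_sum]
  exact sum_congr rfl fun j _ => by ring

theorem cesaroMean_add (α : ℝ) (n : ℕ) (f g : ℕ → ℝ) :
    cesaroMean α n (fun j => f j + g j) = cesaroMean α n f + cesaroMean α n g := by
  simp only [cesaroMean, mul_add, sum_add_distrib]

theorem cesaroMean_const_mul (α : ℝ) (n : ℕ) (c : ℝ) (f : ℕ → ℝ) :
    cesaroMean α n (fun j => c * f j) = c * cesaroMean α n f := by
  rw [cesaroMean, cesaroMean, mul_sum]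
  exact sum_congr rfl fun j _ => by ring

theorem cesaroMean_sum {ι : Type*} (α : ℝ) (n : ℕ) (s : Finset ι) (f : ι → ℕ → ℝ) :
    cesaroMean α n (fun j => ∑ i ∈ s, f i j) = ∑ i ∈ s, cesaroMean α n (f i) := by
  simp only [cesaroMean, mul_sum]
  exact sum_comm

theorem descPochhammer_succ_eval_add_one {R : Type*} [CommRing R] (p : ℕ) (x : R) :
    (descPochhammer R (p + 1)).eval (x + 1) = (x + 1) * (descPochhammer R p).eval x := by
  simp [descPochhammer_succ_left]

theorem sum_range_Gamma_div_mul_descPochhammer {α : ℝ} (hα : 0 < α) (p n : ℕ) :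
    ∑ j ∈ range n, Real.Gamma (j + α) / Real.Gamma (j + 1) * (descPochhammer ℝ p).eval (j : ℝ) =
      Real.Gamma (n + α) * (descPochhammer ℝ (p + 1)).eval (n : ℝ) /
        ((α + p) * Real.Gamma (n + 1)) := by
  induction n with
  | zero => simp
  | succ n ih =>
    have hnα : Real.Gamma (n + 1 + α) = (n + α) * Real.Gamma (n + α) := by
      rw [add_right_comm, Real.Gamma_add_one (by positivity)]
    have hn : Real.Gamma (n + 1 + 1) = (n + 1) * Real.Gamma (n + 1) :=
      Real.Gamma_add_one (by positivity)
    have : Real.Gamma (n + 1) ≠ 0 := (Real.Gamma_pos_of_pos (by positivity)).ne'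
    rw [sum_range_succ, ih]
    push_cast
    rw [descPochhammer_succ_eval_add_one, descPochhammer_succ_eval, hnα, hn]
    field_simp
    ring

theorem cesaroMean_descPochhammer {α : ℝ} (hα : 0 < α) (p n : ℕ) :
    cesaroMean α n (fun j => (descPochhammer ℝ p).eval (j : ℝ)) =
      α / (α + p) * (descPochhammer ℝ p).eval (n : ℝ) := by
  have h := sum_range_Gamma_div_mul_descPochhammer hα p (n + 1)
  have hnα : Real.Gamma (n + 1 + α) = Real.Gamma (n + α + 1) := by rw [add_right_comm]
  have hn : Real.Gamma (n + 1 + 1) = (n + 1) * Real.Gamma (n + 1) :=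
    Real.Gamma_add_one (by positivity)
  have : Real.Gamma (n + 1) ≠ 0 := (Real.Gamma_pos_of_pos (by positivity)).ne'
  have : Real.Gamma (n + α + 1) ≠ 0 := (Real.Gamma_pos_of_pos (by positivity)).ne'
  push_cast at h
  rw [descPochhammer_succ_eval_add_one, hnα, hn] at h
  rw [cesaroMean_eq_mul_sum, h]
  field_simp

theorem tendsto_descPochhammer_eval_div_pow (p : ℕ) :
    Tendsto (fun n : ℕ => (descPochhammer ℝ p).eval (n : ℝ) / (n : ℝ) ^ p) atTop (𝓝 1) := by
  have hdeg : (descPochhammer ℝ p).degree = ((X : ℝ[X]) ^ p).degree := by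
    rw [degree_eq_natDegree (monic_descPochhammer ℝ p).ne_zero, descPochhammer_natDegree,
      degree_X_pow]
  have h := div_tendsto_atTop_leadingCoeff_div_of_degree_eq _ _ hdeg
  rw [(monic_descPochhammer ℝ p).leadingCoeff, leadingCoeff_X_pow, div_one] at h
  simpa [Function.comp_def] using h.comp tendsto_natCast_atTop_atTop

theorem tendsto_cesaroMean_eval_div_pow {α : ℝ} (hα : 0 < α) {k : ℕ} {P : ℝ[X]}
    (hP : P.natDegree ≤ k) :
    Tendsto (fun n : ℕ => cesaroMean α n (fun j => P.eval (j : ℝ)) / (n : ℝ) ^ k) atTop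
      (𝓝 (P.coeff k * (α / (α + k)))) := by
  induction k generalizing P with
  | zero =>
    rw [eq_C_of_natDegree_le_zero hP]
    simp only [eval_C, pow_zero, div_one, coeff_C_zero, Nat.cast_zero, add_zero,
      div_self hα.ne', mul_one]
    refine tendsto_const_nhds.congr fun n => ?_
    have h := cesaroMean_const_mul α n (P.coeff 0) fun j => (descPochhammer ℝ 0).eval (j : ℝ)
    rw [cesaroMean_descPochhammer hα] at h
    simpa [div_self hα.ne'] using h.symm
  | succ k ih =>
    set c := P.coeff (k + 1)
    set Q := P - C c * descPochhammer ℝ (k + 1)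
    have hQ : Q.natDegree ≤ k := by
      rw [natDegree_le_iff_coeff_eq_zero]
      intro N hN
      rcases (Nat.succ_le_of_lt hN).eq_or_lt with rfl | hN'
      · have h := (monic_descPochhammer ℝ (k + 1)).coeff_natDegree
        rw [descPochhammer_natDegree] at h
        simp [Q, c, h]
      · simp [Q, coeff_eq_zero_of_natDegree_lt (hP.trans_lt hN'),
          coeff_eq_zero_of_natDegree_lt ((descPochhammer_natDegree ℝ (k + 1)).trans_lt hN')]
    have hmean (n : ℕ) : cesaroMean α n (fun j => P.eval (j : ℝ)) =
        cesaroMean α n (fun j => Q.eval (j : ℝ)) +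
          c * (α / (α + (k + 1 : ℕ)) * (descPochhammer ℝ (k + 1)).eval (n : ℝ)) := by
      rw [← cesaroMean_descPochhammer hα, ← cesaroMean_const_mul, ← cesaroMean_add]
      simp [Q]
    have hlim := ((ih hQ).mul tendsto_one_div_atTop_nhds_zero_nat).add
      ((tendsto_descPochhammer_eval_div_pow (k + 1)).const_mul (c * (α / (α + (k + 1 : ℕ)))))
    rw [mul_zero, zero_add, mul_one] at hlim
    refine hlim.congr fun n => ?_
    rw [hmean]
    ring

theorem tendsto_cesaroMean_add_pow_div_pow {α : ℝ} (hα : 0 < α) (μ : ℝ) (k : ℕ) :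
    Tendsto (fun n : ℕ => cesaroMean α n (fun j => ((j : ℝ) + μ) ^ k) / (n : ℝ) ^ k) atTop
      (𝓝 (α / (α + k))) := by
  simpa [coeff_X_add_C_pow] using
    tendsto_cesaroMean_eval_div_pow hα (natDegree_pow_X_add_C k μ).le

theorem tendsto_natCast_add_div_add (a b : ℝ) :
    Tendsto (fun n : ℕ => ((n : ℝ) + a) / ((n : ℝ) + b)) atTop (𝓝 1) := by
  have h := (tendsto_natCast_div_add_atTop b).div (tendsto_natCast_div_add_atTop a) one_ne_zero
  rw [div_one] at h
  refine h.congr' ?_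
  filter_upwards [eventually_ne_atTop 0] with n hn
  exact div_div_div_cancel_left' _ _ (Nat.cast_ne_zero.mpr hn)

theorem tendsto_natCast_add_sq_div_four_mul (a b c : ℝ) :
    Tendsto (fun n : ℕ => ((n : ℝ) + a) ^ 2 / (4 * ((n : ℝ) + b) * ((n : ℝ) + c))) atTop
      (𝓝 (1 / 4)) := by
  have h := ((tendsto_natCast_add_div_add a b).mul (tendsto_natCast_add_div_add a c)).div_const 4
  rw [one_mul] at h
  exact h.congr fun n => by simp only [div_eq_mul_inv, mul_inv]; ring

theorem sum_range_alternating_choose_div_add (m : ℕ) {x : ℝ} (hx : 0 < x) :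
    ∑ i ∈ range (m + 1), (-1) ^ i * (m.choose i : ℝ) / (x + i) =
      Real.Gamma x * Real.Gamma (m + 1) / Real.Gamma (x + m + 1) := by
  induction m generalizing x with
  | zero =>
    have := (Real.Gamma_pos_of_pos hx).ne'
    simp [Real.Gamma_add_one hx.ne']
    field_simp
  | succ m ih =>
    have hpascal : ∑ i ∈ range (m + 1 + 1), (-1) ^ i * ((m + 1).choose i : ℝ) / (x + i) =
        ∑ i ∈ range (m + 1), (-1) ^ i * (m.choose i : ℝ) / (x + i) -
          ∑ i ∈ range (m + 1), (-1) ^ i * (m.choose i : ℝ) / (x + 1 + i) := by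
      rw [sub_eq_add_neg, ← sum_neg_distrib]
      convert Finset.sum_choose_succ_mul (R := ℝ) (fun i _ => (-1 : ℝ) ^ i / (x + i)) m using 1
      · exact sum_congr rfl fun i _ => by ring
      · congr 1 <;> exact sum_congr rfl fun i _ => by push_cast; ring
    have hx1 : Real.Gamma (x + 1) = x * Real.Gamma x := Real.Gamma_add_one hx.ne'
    have hxm : Real.Gamma (x + 1 + m + 1) = (x + m + 1) * Real.Gamma (x + m + 1) := by
      rw [add_right_comm x 1, Real.Gamma_add_one (by positivity)]
    have hxm' : Real.Gamma (x + m + 1 + 1) = (x + m + 1) * Real.Gamma (x + m + 1) :=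
      Real.Gamma_add_one (by positivity)
    have hm : Real.Gamma (m + 1 + 1) = (m + 1) * Real.Gamma (m + 1) :=
      Real.Gamma_add_one (by positivity)
    have : Real.Gamma (x + m + 1) ≠ 0 := (Real.Gamma_pos_of_pos (by positivity)).ne'
    rw [hpascal, ih hx, ih (by positivity), hx1, hxm]
    push_cast
    rw [hm, ← add_assoc, hxm']
    field_simp
    ring

theorem sum_range_alternating_choose_mul_div_add_two_mul (m : ℕ) {α : ℝ} (hα : 0 < α) :
    ∑ i ∈ range (m + 1), (-1) ^ i * (m.choose i : ℝ) * (α / (α + 2 * i)) =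
      Real.Gamma (α / 2 + 1) * Real.Gamma (m + 1) / Real.Gamma (α / 2 + m + 1) := by
  have hα2 : 0 < α / 2 := by positivity
  have : Real.Gamma (α / 2 + m + 1) ≠ 0 := (Real.Gamma_pos_of_pos (by positivity)).ne'
  have hsummand (i : ℕ) : (-1) ^ i * (m.choose i : ℝ) * (α / (α + 2 * i)) =
      α / 2 * ((-1) ^ i * (m.choose i : ℝ) / (α / 2 + i)) := by
    field_simp
  simp only [hsummand, ← mul_sum]
  rw [sum_range_alternating_choose_div_add m hα2, Real.Gamma_add_one hα2.ne']
  field_simp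

theorem cesaroMean_sq_sub_sq_div_pow_eq {α μ d : ℝ} {n : ℕ} (hn : n ≠ 0) (hd : d ≠ 0) (m : ℕ) :
    (cesaroMean α n fun j => ((((n : ℝ) + μ) ^ 2 - ((j : ℝ) + μ) ^ 2) / d) ^ m) =
      ∑ i ∈ range (m + 1), (-1) ^ i * (m.choose i : ℝ) *
        ((((n : ℝ) + μ) ^ 2 / d) ^ (m - i) * ((n : ℝ) ^ 2 / d) ^ i *
          (cesaroMean α n (fun j => ((j : ℝ) + μ) ^ (2 * i)) / (n : ℝ) ^ (2 * i))) := by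
  have hbinom (j : ℕ) : ((((n : ℝ) + μ) ^ 2 - ((j : ℝ) + μ) ^ 2) / d) ^ m =
      ∑ i ∈ range (m + 1), (-1) ^ i * (m.choose i : ℝ) * (((n : ℝ) + μ) ^ 2 / d) ^ (m - i) /
        d ^ i * ((j : ℝ) + μ) ^ (2 * i) := by
    rw [show (((n : ℝ) + μ) ^ 2 - ((j : ℝ) + μ) ^ 2) / d =
      -(((j : ℝ) + μ) ^ 2 / d) + ((n : ℝ) + μ) ^ 2 / d by ring, add_pow]
    refine sum_congr rfl fun i _ => ?_
    rw [neg_pow, div_pow (((j : ℝ) + μ) ^ 2), ← pow_mul]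
    ring
  have : (n : ℝ) ≠ 0 := Nat.cast_ne_zero.mpr hn
  simp only [hbinom, cesaroMean_sum, cesaroMean_const_mul]
  refine sum_congr rfl fun i _ => ?_
  rw [div_pow ((n : ℝ) ^ 2), ← pow_mul]
  field_simp

theorem tendsto_cesaroMean_sq_sub_sq_div_pow {α : ℝ} (hα : 0 < α) (μ b c : ℝ) (m : ℕ) :
    Tendsto (fun n : ℕ => cesaroMean α n fun j =>
        ((((n : ℝ) + μ) ^ 2 - ((j : ℝ) + μ) ^ 2) / (4 * ((n : ℝ) + b) * ((n : ℝ) + c))) ^ m)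
      atTop (𝓝 (Real.Gamma (α / 2 + 1) * Real.Gamma (m + 1) /
        (4 ^ m * Real.Gamma (α / 2 + m + 1)))) := by
  have hterm (i : ℕ) := ((((tendsto_natCast_add_sq_div_four_mul μ b c).pow (m - i)).mul
    ((tendsto_natCast_add_sq_div_four_mul 0 b c).pow i)).mul
      (tendsto_cesaroMean_add_pow_div_pow hα μ (2 * i))).const_mul ((-1) ^ i * (m.choose i : ℝ))
  have hlim := tendsto_finsetSum (range (m + 1)) fun i _ => hterm i
  have hvalue : ∑ i ∈ range (m + 1), (-1) ^ i * (m.choose i : ℝ) *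
      ((1 / 4) ^ (m - i) * (1 / 4) ^ i * (α / (α + (2 * i : ℕ)))) =
        Real.Gamma (α / 2 + 1) * Real.Gamma (m + 1) / (4 ^ m * Real.Gamma (α / 2 + m + 1)) := by
    rw [div_mul_eq_div_div_swap, ← sum_range_alternating_choose_mul_div_add_two_mul m hα,
      sum_div]
    refine sum_congr rfl fun i hi => ?_
    rw [pow_sub_mul_pow _ (Nat.le_of_lt_succ (mem_range.mp hi))]
    push_cast
    field_simp
    rw [mul_assoc, ← mul_pow]
    norm_num
  rw [hvalue] at hlim
  refine hlim.congr' ?_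
  filter_upwards [eventually_ne_atTop 0, tendsto_natCast_atTop_atTop.eventually_gt_atTop (-b),
    tendsto_natCast_atTop_atTop.eventually_gt_atTop (-c)] with n hn hb hc
  rw [cesaroMean_sq_sub_sq_div_pow_eq hn
    (mul_ne_zero (mul_ne_zero four_ne_zero (by linarith)) (by linarith))]
  simp

theorem sum_range_cesaro_mul_pow_eq_cesaroMean (α lam : ℝ) (m n : ℕ) :
    ∑ k ∈ range (n + 1),
      (α * Real.Gamma ((n : ℝ) - (k : ℝ) + α) * Real.Gamma ((n : ℝ) + 1) /
        (Real.Gamma ((n : ℝ) - (k : ℝ) + 1) * Real.Gamma ((n : ℝ) + α + 1))) *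
      (((k : ℝ) * (2 * (n : ℝ) - (k : ℝ) + 2 * lam - 1)) /
        (4 * ((n : ℝ) + lam - 1) * ((n : ℝ) + lam))) ^ m =
    cesaroMean α n fun j => ((((n : ℝ) + (lam - 1 / 2)) ^ 2 - ((j : ℝ) + (lam - 1 / 2)) ^ 2) /
      (4 * ((n : ℝ) + (lam - 1)) * ((n : ℝ) + lam))) ^ m := by
  rw [cesaroMean, ← sum_range_reflect]
  refine sum_congr rfl fun k hk => ?_
  rw [add_tsub_cancel_right, Nat.cast_sub (Nat.le_of_lt_succ (mem_range.mp hk)), sub_sub_cancel]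
  congr 2
  ring

theorem stmt11_general (α : ℝ) (hα : 0 < α) (lam : ℝ)
    (m : ℕ) :
    Filter.Tendsto (fun n : ℕ => ∑ k ∈ Finset.range (n+1),
      (α * Real.Gamma ((n:ℝ)-(k:ℝ)+α) * Real.Gamma ((n:ℝ)+1) /
        (Real.Gamma ((n:ℝ)-(k:ℝ)+1) * Real.Gamma ((n:ℝ)+α+1))) *
      (((k:ℝ) * (2*(n:ℝ) - (k:ℝ) + 2*lam - 1)) / (4*((n:ℝ)+lam-1)*((n:ℝ)+lam)))^m)
      Filter.atTop
      (nhds (Real.Gamma (α/2+1) * Real.Gamma ((m:ℝ)+1) / (4^m * Real.Gamma (α/2+(m:ℝ)+1)))) := by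
  simpa only [sum_range_cesaro_mul_pow_eq_cesaroMean] using
    tendsto_cesaroMean_sq_sub_sq_div_pow hα (lam - 1 / 2) (lam - 1) lam m

theorem stmt11 (α : ℝ) (hα : 0 < α) (lam : ℝ) (hlam : -(1/2) < lam)
    (m : ℕ) (hm : 1 ≤ m) :
    Filter.Tendsto (fun n : ℕ => ∑ k ∈ Finset.range (n+1),
      (α * Real.Gamma ((n:ℝ)-(k:ℝ)+α) * Real.Gamma ((n:ℝ)+1) /
        (Real.Gamma ((n:ℝ)-(k:ℝ)+1) * Real.Gamma ((n:ℝ)+α+1))) *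
      (((k:ℝ) * (2*(n:ℝ) - (k:ℝ) + 2*lam - 1)) / (4*((n:ℝ)+lam-1)*((n:ℝ)+lam)))^m)
      Filter.atTop
      (nhds (Real.Gamma (α/2+1) * Real.Gamma ((m:ℝ)+1) / (4^m * Real.Gamma (α/2+(m:ℝ)+1)))) :=
  stmt11_general α hα lam m
end

section
/- Let ν > 0 and define σ_0^(G,ν) = 1 and σ_j^(G,ν) = (2j + 2ν − 1) Γ(j + 2ν − 1) / ( Γ(2ν) Γ(j+1) ) for j ≥ 1. Then for every n ∈ ℕ, Σ_{j=0}^n σ_j^(G,ν) = (2n + 2ν) Γ(n + 2ν) / ( Γ(2ν + 1) Γ(n+1) ); consequently, with τ_n^(G,ν) = Γ(2ν+1) Γ(n+1) / ( (2n+2ν) Γ(n+2ν) ), the Gegenbauer summation weights σ_{n,k}^(G,ν) = τ_n^(G,ν) σ_{n−k}^(G,ν) form a regular Nörlund summation method, and its normalization constant N_n^(G,ν) = τ_n^(G,ν) Σ_{k=0}^n 1/τ_k^(G,ν) equals (2n+2ν+1)(n+2ν) / ( (2n+2ν)(2ν+1) ). -/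
/-!
Both closed forms are telescoping identities: with `S n` the claimed value of the partial sums,
`Γ (x + 1) = x Γ x` reduces `S (n + 1) - S n = σ (n + 1)` and the analogous step for `∑ S k` to
polynomial identities. Since `τ n = (S n)⁻¹`, the weights are the Nörlund means of the positive
sequence `σ`, which are regular because `σ (n + 1) / S (n + 1) ≤ 2ν / (n + 2ν) → 0`.
-/

open Filter Finset Real Topology

theorem sum_range_succ_reflect (p : ℕ → ℝ) (n : ℕ) :
    ∑ k ∈ range (n + 1), p (n - k) = ∑ j ∈ range (n + 1), p j := by
  simpa using sum_range_reflect p (n + 1)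

theorem norlund_row_sum_eq_one {p : ℕ → ℝ} {n : ℕ} (h : ∑ j ∈ range (n + 1), p j ≠ 0) :
    ∑ k ∈ range (n + 1), (∑ j ∈ range (n + 1), p j)⁻¹ * p (n - k) = 1 := by
  rw [← mul_sum, sum_range_succ_reflect, inv_mul_cancel₀ h]

-- The partial sums increase, so `p (n - k) / P n ≤ p (n - k) / P (n - k)`.
theorem norlund_tendsto_zero {p : ℕ → ℝ} (hp : ∀ j, 0 < p j)
    (h : Tendsto (fun m => p m / ∑ j ∈ range (m + 1), p j) atTop (𝓝 0)) (k : ℕ) :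
    Tendsto (fun n => (∑ j ∈ range (n + 1), p j)⁻¹ * p (n - k)) atTop (𝓝 0) := by
  have hP : ∀ m, 0 < ∑ j ∈ range (m + 1), p j := fun m =>
    sum_pos (fun j _ => hp j) nonempty_range_add_one
  refine squeeze_zero (fun n => (mul_pos (inv_pos.2 (hP n)) (hp _)).le) (fun n => ?_)
    (h.comp (tendsto_sub_atTop_nat k))
  rw [inv_mul_eq_div]
  exact div_le_div_of_nonneg_left (hp _).le (hP _) <|
    sum_le_sum_of_subset_of_nonneg (range_subset_range.2 (by simp)) fun i _ _ => (hp i).le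

theorem Real.Gamma_natCast_add_one_add {x : ℝ} (hx : 0 < x) (n : ℕ) :
    Gamma ((n : ℝ) + 1 + x) = ((n : ℝ) + x) * Gamma ((n : ℝ) + x) := by
  rw [add_right_comm, Gamma_add_one (by positivity)]

noncomputable def gegenbauerPartialSum (β : ℝ) (n : ℕ) : ℝ :=
  (2 * (n : ℝ) + β) * Gamma ((n : ℝ) + β) / (Gamma (β + 1) * Gamma ((n : ℝ) + 1))

theorem gegenbauerPartialSum_pos {β : ℝ} (hβ : 0 < β) (n : ℕ) : 0 < gegenbauerPartialSum β n := by
  unfold gegenbauerPartialSum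
  positivity

theorem gegenbauerPartialSum_succ {β : ℝ} (hβ : 0 < β) (n : ℕ) :
    gegenbauerPartialSum β (n + 1) =
      (2 * (n : ℝ) + 2 + β) * ((n : ℝ) + β) * Gamma ((n : ℝ) + β) /
        (β * Gamma β * (((n : ℝ) + 1) * Gamma ((n : ℝ) + 1))) := by
  rw [gegenbauerPartialSum]
  push_cast
  rw [Gamma_natCast_add_one_add hβ, Gamma_natCast_add_one_add one_pos, Gamma_add_one hβ.ne']
  ring

theorem sum_range_gegenbauerPartialSum {β : ℝ} (hβ : 0 < β) (n : ℕ) :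
    ∑ k ∈ range (n + 1), gegenbauerPartialSum β k =
      (2 * (n : ℝ) + β + 1) * ((n : ℝ) + β) / ((2 * (n : ℝ) + β) * (β + 1)) *
        gegenbauerPartialSum β n := by
  induction n with
  | zero =>
    simp only [zero_add, sum_range_one, Nat.cast_zero, mul_zero]
    field_simp
  | succ n ih =>
    rw [sum_range_succ, ih, gegenbauerPartialSum_succ hβ, gegenbauerPartialSum,
      Gamma_add_one hβ.ne']
    push_cast
    field_simp
    ring

section Gegenbauer

variable {β : ℝ} {σ : ℕ → ℝ}

theorem gegenbauer_weight_succ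
    (hσ : ∀ j : ℕ, 1 ≤ j → σ j =
      (2 * (j : ℝ) + β - 1) * Gamma ((j : ℝ) + β - 1) / (Gamma β * Gamma ((j : ℝ) + 1)))
    (j : ℕ) :
    σ (j + 1) = (2 * (j : ℝ) + β + 1) * Gamma ((j : ℝ) + β) /
      (Gamma β * (((j : ℝ) + 1) * Gamma ((j : ℝ) + 1))) := by
  rw [hσ (j + 1) (by omega)]
  push_cast
  rw [Gamma_natCast_add_one_add one_pos, show (j : ℝ) + 1 + β - 1 = j + β by ring]
  ring_nf

theorem gegenbauer_weight_pos (hβ : 0 < β) (hσ0 : σ 0 = 1)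
    (hσ : ∀ j : ℕ, 1 ≤ j → σ j =
      (2 * (j : ℝ) + β - 1) * Gamma ((j : ℝ) + β - 1) / (Gamma β * Gamma ((j : ℝ) + 1)))
    (j : ℕ) : 0 < σ j := by
  cases j with
  | zero => simp [hσ0]
  | succ j =>
    rw [gegenbauer_weight_succ hσ]
    positivity

theorem sum_range_gegenbauer_weight (hβ : 0 < β) (hσ0 : σ 0 = 1)
    (hσ : ∀ j : ℕ, 1 ≤ j → σ j =
      (2 * (j : ℝ) + β - 1) * Gamma ((j : ℝ) + β - 1) / (Gamma β * Gamma ((j : ℝ) + 1)))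
    (n : ℕ) : ∑ j ∈ range (n + 1), σ j = gegenbauerPartialSum β n := by
  induction n with
  | zero =>
    simp only [zero_add, sum_range_one, hσ0, gegenbauerPartialSum, Nat.cast_zero, mul_zero,
      Gamma_one, mul_one, Gamma_add_one hβ.ne']
    field_simp
  | succ n ih =>
    rw [sum_range_succ, ih, gegenbauer_weight_succ hσ, gegenbauerPartialSum_succ hβ,
      gegenbauerPartialSum, Gamma_add_one hβ.ne']
    field_simp
    ring

theorem gegenbauer_weight_div_partialSum_le (hβ : 0 < β)
    (hσ : ∀ j : ℕ, 1 ≤ j → σ j =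
      (2 * (j : ℝ) + β - 1) * Gamma ((j : ℝ) + β - 1) / (Gamma β * Gamma ((j : ℝ) + 1)))
    (j : ℕ) : σ (j + 1) / gegenbauerPartialSum β (j + 1) ≤ β / ((j : ℝ) + β) := by
  have hratio : σ (j + 1) / gegenbauerPartialSum β (j + 1) =
      β / ((j : ℝ) + β) * ((2 * (j : ℝ) + β + 1) / (2 * (j : ℝ) + β + 2)) := by
    rw [gegenbauer_weight_succ hσ, gegenbauerPartialSum_succ hβ]
    field_simp
    ring
  rw [hratio]
  exact mul_le_of_le_one_right (by positivity) ((div_le_one (by positivity)).2 (by linarith))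

theorem tendsto_gegenbauer_weight_div_sum (hβ : 0 < β) (hσ0 : σ 0 = 1)
    (hσ : ∀ j : ℕ, 1 ≤ j → σ j =
      (2 * (j : ℝ) + β - 1) * Gamma ((j : ℝ) + β - 1) / (Gamma β * Gamma ((j : ℝ) + 1))) :
    Tendsto (fun m => σ m / ∑ j ∈ range (m + 1), σ j) atTop (𝓝 0) := by
  rw [← tendsto_add_atTop_iff_nat 1]
  simp only [sum_range_gegenbauer_weight hβ hσ0 hσ]
  refine squeeze_zero
    (fun j => (div_pos (gegenbauer_weight_pos hβ hσ0 hσ _) (gegenbauerPartialSum_pos hβ _)).le)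
    (gegenbauer_weight_div_partialSum_le hβ hσ) ?_
  exact tendsto_const_nhds.div_atTop
    (tendsto_atTop_add_const_right _ β tendsto_natCast_atTop_atTop)

end Gegenbauer

theorem stmt12 (ν : ℝ) (hν : 0 < ν)
    (σG : ℕ → ℝ) (hσG0 : σG 0 = 1)
    (hσG : ∀ j : ℕ, 1 ≤ j → σG j =
      (2*(j:ℝ)+2*ν-1) * Real.Gamma ((j:ℝ)+2*ν-1) /
        (Real.Gamma (2*ν) * Real.Gamma ((j:ℝ)+1)))
    (τG : ℕ → ℝ) (hτG : ∀ n : ℕ, τG n =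
      Real.Gamma (2*ν+1) * Real.Gamma ((n:ℝ)+1) /
        ((2*(n:ℝ)+2*ν) * Real.Gamma ((n:ℝ)+2*ν)))
    :
    (∀ n : ℕ, ∑ j ∈ Finset.range (n+1), σG j =
      (2*(n:ℝ)+2*ν) * Real.Gamma ((n:ℝ)+2*ν) / (Real.Gamma (2*ν+1) * Real.Gamma ((n:ℝ)+1))) ∧
    (∀ n k : ℕ, k ≤ n → 0 ≤ τG n * σG (n-k)) ∧
    (∀ n : ℕ, ∑ k ∈ Finset.range (n+1), τG n * σG (n-k) = 1) ∧
    (∀ k : ℕ, Filter.Tendsto (fun n => τG n * σG (n-k)) Filter.atTop (nhds 0)) ∧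
    (∀ n : ℕ, τG n * ∑ k ∈ Finset.range (n+1), (τG k)⁻¹ =
      (2*(n:ℝ)+2*ν+1)*((n:ℝ)+2*ν) / ((2*(n:ℝ)+2*ν)*(2*ν+1))) := by
  have hβ : 0 < 2 * ν := by positivity
  have hS := sum_range_gegenbauer_weight hβ hσG0 hσG
  have hσpos := gegenbauer_weight_pos hβ hσG0 hσG
  have hτ : τG = fun n => (gegenbauerPartialSum (2 * ν) n)⁻¹ := by
    funext n
    rw [hτG, gegenbauerPartialSum, inv_div]
  subst hτ
  simp only [← hS]
  refine ⟨hS, fun n k _ => ?_, fun n => norlund_row_sum_eq_one ?_,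
    norlund_tendsto_zero hσpos (tendsto_gegenbauer_weight_div_sum hβ hσG0 hσG), fun n => ?_⟩
  · exact (mul_pos (inv_pos.2 (sum_pos (fun j _ => hσpos j) nonempty_range_add_one))
      (hσpos _)).le
  · exact (hS n ▸ gegenbauerPartialSum_pos hβ n).ne'
  · simp only [inv_inv, hS, sum_range_gegenbauerPartialSum hβ]
    field_simp [(gegenbauerPartialSum_pos hβ n).ne']
end

section
/- For every real ν > 0, every real λ > −1/2, and every integer m ≥ 1, lim_{n→∞} Σ_{k=0}^n σ_{n,k}^(G,ν) · ( k(2n − k + 2λ − 1) / (4(n+λ−1)(n+λ)) )^m = Γ(ν + 1) Γ(m+1) / (4^m Γ(ν + m + 1)), where σ_{n,k}^(G,ν) = τ_n^(G,ν) σ_{n−k}^(G,ν) are the Gegenbauer summation weights. In particular, the Gegenbauer method (G,ν) produces the same limits Σ_{0,2m} for the ultraspherical recurrence coefficients as the Cesàro method (C,2ν). -/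
/-!
Write `c = λ - 1/2` and reflect `k = n - j`: then `k (2n - k + 2λ - 1) = (n + c)² - (j + c)²`, so by
the binomial theorem the sum is a combination of the Gegenbauer means
`τₙ ∑_{j ≤ n} σⱼ (j + c)^(2i)`. With `wⱼ = (β)ⱼ / j!` the rising-factorial identity
`(β + d) ∑_{j ≤ n} wⱼ (j + β)_d = wₙ (n + β)_{d+1}` shows, by induction on the degree, that
`∑_{j ≤ n} wⱼ p(j) / (wₙ n^(d+1)) → [x^d] p / (β + d)` when `deg p ≤ d`. For `β = 2ν` one has
`σⱼ = wⱼ + wⱼ₋₁` and `τₙ = ν / ((n + ν) wₙ)`, hence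
`τₙ ∑_{j ≤ n} σⱼ p(j) / n^d → 2ν/(2ν + d) · [x^d] p`.
As `(n + c)² / (4(n + λ - 1)(n + λ)) → 1/4`, the limit is `4^(-m) ∑ᵢ (-1)ⁱ C(m,i) ν/(ν + i)`, a
Beta-function value.
-/

open Filter Finset Polynomial Topology
open scoped Nat

/-- `(β)ⱼ / j! = C(j + β - 1, j)`, the coefficients of `(1 - t)^(-β)`. -/
noncomputable def risingBinom (β : ℝ) (j : ℕ) : ℝ := (ascPochhammer ℝ j).eval β / j !

lemma risingBinom_pos {β : ℝ} (hβ : 0 < β) (j : ℕ) : 0 < risingBinom β j :=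
  div_pos (ascPochhammer_pos j β hβ) (by positivity)

lemma risingBinom_succ (β : ℝ) (j : ℕ) :
    risingBinom β (j + 1) = risingBinom β j * (β + j) / (j + 1) := by
  simp only [risingBinom, ascPochhammer_succ_eval, Nat.factorial_succ, Nat.cast_mul]
  push_cast
  field_simp

-- The discrete analogue of `(β + d) ∫₀ˣ t^(β-1) t^d dt = x^(β+d)`.
theorem sum_risingBinom_mul_ascPochhammer (β : ℝ) (d n : ℕ) :
    (β + d) * ∑ j ∈ range (n + 1), risingBinom β j * (ascPochhammer ℝ d).eval (j + β) =
      risingBinom β n * (ascPochhammer ℝ (d + 1)).eval (n + β) := by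
  induction n with
  | zero => simp [risingBinom, ascPochhammer_succ_eval, mul_comm]
  | succ n ih =>
    have left : (ascPochhammer ℝ (d + 1)).eval (n + β) =
        (n + β) * (ascPochhammer ℝ d).eval (n + 1 + β) := by
      simp [ascPochhammer_succ_left, add_right_comm]
    have right : (ascPochhammer ℝ (d + 1)).eval (n + 1 + β) =
        (ascPochhammer ℝ d).eval (n + 1 + β) * (n + 1 + β + d) :=
      ascPochhammer_succ_eval d _
    rw [sum_range_succ, mul_add, ih, risingBinom_succ, left]
    push_cast
    rw [right]
    field_simp
    ring

lemma tendsto_ascPochhammer_eval_add_div_pow (β : ℝ) (d : ℕ) :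
    Tendsto (fun n : ℕ => (ascPochhammer ℝ d).eval (n + β) / (n : ℝ) ^ d) atTop (𝓝 1) := by
  have hmonic : (taylor β (ascPochhammer ℝ d)).Monic := by
    rw [Monic, leadingCoeff_taylor, (monic_ascPochhammer ℝ d).leadingCoeff]
  have hdeg : (taylor β (ascPochhammer ℝ d)).degree = (X ^ d : ℝ[X]).degree := by
    rw [degree_taylor, degree_eq_natDegree (monic_ascPochhammer ℝ d).ne_zero,
      ascPochhammer_natDegree, degree_X_pow]
  have := (div_tendsto_atTop_leadingCoeff_div_of_degree_eq _ _ hdeg).comp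
    tendsto_natCast_atTop_atTop
  simpa [Function.comp_def, taylor_eval, hmonic.leadingCoeff] using this

lemma coeff_taylor_of_natDegree_le {R : Type*} [CommSemiring R] {p : R[X]} {d : ℕ} (r : R)
    (hp : p.natDegree ≤ d) : (taylor r p).coeff d = p.coeff d := by
  rcases hp.lt_or_eq with h | rfl
  · rw [coeff_eq_zero_of_natDegree_lt h,
      coeff_eq_zero_of_natDegree_lt (by rwa [natDegree_taylor])]
  · conv_lhs => rw [← natDegree_taylor p r]
    exact leadingCoeff_taylor r p

lemma coeff_taylor_ascPochhammer (β : ℝ) (d : ℕ) :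
    (taylor β (ascPochhammer ℝ d)).coeff d = 1 := by
  rw [coeff_taylor_of_natDegree_le β (ascPochhammer_natDegree ℝ d).le]
  simpa [ascPochhammer_natDegree] using (monic_ascPochhammer ℝ d).coeff_natDegree

section RisingBinomMeans

variable {β : ℝ} (hβ : 0 < β)
include hβ

lemma tendsto_sum_risingBinom_mul_ascPochhammer (d : ℕ) :
    Tendsto (fun n : ℕ =>
      (∑ j ∈ range (n + 1), risingBinom β j * (ascPochhammer ℝ d).eval (j + β)) /
        (risingBinom β n * (n : ℝ) ^ (d + 1))) atTop (𝓝 (1 / (β + d))) := by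
  refine ((tendsto_ascPochhammer_eval_add_div_pow β (d + 1)).div_const (β + d)).congr
    fun n => ?_
  have hw := (risingBinom_pos hβ n).ne'
  have hβd : β + d ≠ 0 := by positivity
  field_simp
  rw [sum_risingBinom_mul_ascPochhammer, mul_comm]

theorem tendsto_sum_risingBinom_mul_eval (d : ℕ) (p : ℝ[X]) (hp : p.natDegree ≤ d) :
    Tendsto (fun n : ℕ => (∑ j ∈ range (n + 1), risingBinom β j * p.eval (j : ℝ)) /
      (risingBinom β n * (n : ℝ) ^ (d + 1))) atTop (𝓝 (p.coeff d / (β + d))) := by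
  induction d generalizing p with
  | zero =>
    rw [eq_C_of_natDegree_le_zero hp]
    convert (tendsto_sum_risingBinom_mul_ascPochhammer hβ 0).const_mul (p.coeff 0) using 1
    · ext n
      simp only [eval_C, ← sum_mul, zero_add, pow_one, ascPochhammer_zero, eval_one, mul_one]
      ring
    · simp [div_eq_mul_inv]
  | succ d ih =>
    set V := taylor β (ascPochhammer ℝ (d + 1))
    set q := p - C (p.coeff (d + 1)) * V
    have hV : V.natDegree = d + 1 := by rw [natDegree_taylor, ascPochhammer_natDegree]
    have hq : q.natDegree ≤ d := by
      refine natDegree_le_pred (n := d + 1) ?_ ?_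
      · simpa using natDegree_sub_le_of_le hp ((natDegree_C_mul_le _ _).trans hV.le)
      · simp [q, V, coeff_taylor_ascPochhammer]
    have hlead := (tendsto_sum_risingBinom_mul_ascPochhammer hβ (d + 1)).const_mul (p.coeff (d + 1))
    have hlow := (ih q hq).mul tendsto_inv_atTop_nhds_zero_nat
    convert hlead.add hlow using 1
    · ext n
      have hsplit : ∀ j : ℕ, risingBinom β j * p.eval (j : ℝ) = p.coeff (d + 1) *
          (risingBinom β j * (ascPochhammer ℝ (d + 1)).eval (j + β)) +
            risingBinom β j * q.eval (j : ℝ) := by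
        intro j
        simp only [q, V, eval_sub, eval_mul, eval_C, taylor_eval]
        ring
      simp only [hsplit, sum_add_distrib, ← mul_sum, div_eq_mul_inv, mul_inv, pow_succ]
      ring
    · rw [mul_zero, add_zero, mul_one_div]

theorem tendsto_sum_range_risingBinom_mul_eval_succ (d : ℕ) (p : ℝ[X])
    (hp : p.natDegree ≤ d) :
    Tendsto (fun n : ℕ => (∑ j ∈ range n, risingBinom β j * p.eval ((j : ℝ) + 1)) /
      (risingBinom β n * (n : ℝ) ^ (d + 1))) atTop (𝓝 (p.coeff d / (β + d))) := by
  have hfull := tendsto_sum_risingBinom_mul_eval hβ d (taylor 1 p) (by rwa [natDegree_taylor])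
  have hdeg : (taylor 1 p).degree < (X ^ (d + 1) : ℝ[X]).degree := by
    rw [degree_taylor, degree_X_pow]
    exact (degree_le_of_natDegree_le hp).trans_lt (by exact_mod_cast d.lt_succ_self)
  have hlast : Tendsto (fun n : ℕ => (taylor 1 p).eval (n : ℝ) / (n : ℝ) ^ (d + 1))
      atTop (𝓝 0) := by
    simpa [Function.comp_def] using
      (div_tendsto_atTop_zero_of_degree_lt _ _ hdeg).comp tendsto_natCast_atTop_atTop
  convert hfull.sub hlast using 1
  · ext n
    have hw := (risingBinom_pos hβ n).ne'
    simp only [sum_range_succ, taylor_eval, add_div, mul_div_mul_left _ _ hw,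
      add_sub_cancel_right]
  · rw [coeff_taylor_of_natDegree_le 1 hp, sub_zero]

end RisingBinomMeans

lemma Gamma_add_nat_eq_mul_ascPochhammer {x : ℝ} (hx : 0 < x) (n : ℕ) :
    Real.Gamma (x + n) = Real.Gamma x * (ascPochhammer ℝ n).eval x := by
  induction n with
  | zero => simp
  | succ n ih =>
    rw [Nat.cast_succ, ← add_assoc, Real.Gamma_add_one (by positivity), ih,
      ascPochhammer_succ_eval]
    ring

noncomputable def gegenbauerSigma (ν : ℝ) (j : ℕ) : ℝ :=
  if j = 0 then 1 else
    (2 * (j : ℝ) + 2 * ν - 1) * Real.Gamma ((j : ℝ) + 2 * ν - 1) /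
      (Real.Gamma (2 * ν) * Real.Gamma ((j : ℝ) + 1))

noncomputable def gegenbauerTau (ν : ℝ) (n : ℕ) : ℝ :=
  Real.Gamma (2 * ν + 1) * Real.Gamma ((n : ℝ) + 1) /
    ((2 * (n : ℝ) + 2 * ν) * Real.Gamma ((n : ℝ) + 2 * ν))

section Gegenbauer

variable {ν : ℝ} (hν : 0 < ν)
include hν

lemma gegenbauerSigma_succ (j : ℕ) :
    gegenbauerSigma ν (j + 1) = risingBinom (2 * ν) (j + 1) + risingBinom (2 * ν) j := by
  have hΓ : Real.Gamma (((j + 1 : ℕ) : ℝ) + 2 * ν - 1) =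
      Real.Gamma (2 * ν) * (ascPochhammer ℝ j).eval (2 * ν) := by
    rw [← Gamma_add_nat_eq_mul_ascPochhammer (by positivity)]
    push_cast
    ring_nf
  have hΓ2ν := (Real.Gamma_pos_of_pos (by positivity : 0 < 2 * ν)).ne'
  rw [gegenbauerSigma, if_neg j.succ_ne_zero, hΓ, Real.Gamma_nat_eq_factorial, risingBinom_succ,
    risingBinom, Nat.factorial_succ]
  push_cast
  field_simp
  ring

lemma sum_gegenbauerSigma_mul (f : ℕ → ℝ) (n : ℕ) :
    ∑ j ∈ range (n + 1), gegenbauerSigma ν j * f j =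
      ∑ j ∈ range (n + 1), risingBinom (2 * ν) j * f j +
        ∑ j ∈ range n, risingBinom (2 * ν) j * f (j + 1) := by
  simp only [sum_range_succ' (fun j => gegenbauerSigma ν j * f j), gegenbauerSigma_succ hν,
    sum_range_succ' (fun j => risingBinom (2 * ν) j * f j), add_mul, sum_add_distrib]
  simp only [risingBinom, gegenbauerSigma, ↓reduceIte, ascPochhammer_zero, eval_one,
    Nat.factorial_zero, Nat.cast_one, div_one]
  ring

lemma gegenbauerTau_eq (n : ℕ) :
    gegenbauerTau ν n = ν / ((n + ν) * risingBinom (2 * ν) n) := by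
  have hΓ : Real.Gamma ((n : ℝ) + 2 * ν) =
      Real.Gamma (2 * ν) * (ascPochhammer ℝ n).eval (2 * ν) := by
    rw [add_comm, Gamma_add_nat_eq_mul_ascPochhammer (by positivity)]
  have hΓ2ν := (Real.Gamma_pos_of_pos (by positivity : 0 < 2 * ν)).ne'
  have hpoch := (ascPochhammer_pos n (2 * ν) (by positivity)).ne'
  rw [gegenbauerTau, hΓ, Real.Gamma_add_one (by positivity), Real.Gamma_nat_eq_factorial,
    risingBinom]
  field_simp

theorem tendsto_gegenbauerTau_mul_sum (d : ℕ) (p : ℝ[X]) (hp : p.natDegree ≤ d) :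
    Tendsto (fun n : ℕ => gegenbauerTau ν n *
      (∑ j ∈ range (n + 1), gegenbauerSigma ν j * p.eval (j : ℝ)) / (n : ℝ) ^ d)
      atTop (𝓝 (2 * ν / (2 * ν + d) * p.coeff d)) := by
  have h2ν : 0 < 2 * ν := by positivity
  have hsum := (tendsto_sum_risingBinom_mul_eval h2ν d p hp).add
    (tendsto_sum_range_risingBinom_mul_eval_succ h2ν d p hp)
  have hlim := ((tendsto_natCast_div_add_atTop ν).mul hsum).const_mul ν
  convert hlim.congr' ?_ using 2
  · field_simp
    ring
  · filter_upwards [eventually_ne_atTop 0] with n hn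
    have hw := (risingBinom_pos h2ν n).ne'
    rw [gegenbauerTau_eq hν, sum_gegenbauerSigma_mul hν]
    push_cast
    field_simp
    ring

theorem tendsto_gegenbauerTau_mul_sum_add_pow (c : ℝ) (d : ℕ) :
    Tendsto (fun n : ℕ => gegenbauerTau ν n *
      (∑ j ∈ range (n + 1), gegenbauerSigma ν j * ((j : ℝ) + c) ^ d) / (n : ℝ) ^ d)
      atTop (𝓝 (2 * ν / (2 * ν + d))) := by
  have hdeg : ((X + C c) ^ d).natDegree ≤ d := by
    rw [natDegree_pow, natDegree_X_add_C, mul_one]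
  have hcoeff : ((X + C c) ^ d).coeff d = 1 := by
    rw [coeff_X_add_C_pow, Nat.sub_self, pow_zero, Nat.choose_self, Nat.cast_one, one_mul]
  simpa [hcoeff] using tendsto_gegenbauerTau_mul_sum hν d _ hdeg

end Gegenbauer

lemma sum_range_succ_choose_mul {R : Type*} [CommSemiring R] (g : ℕ → R) (m : ℕ) :
    ∑ i ∈ range (m + 2), ((m + 1).choose i : R) * g i =
      ∑ i ∈ range (m + 1), (m.choose i : R) * g i +
        ∑ i ∈ range (m + 1), (m.choose i : R) * g (i + 1) := by
  rw [sum_range_succ' _ (m + 1), sum_range_succ' (fun i => (m.choose i : R) * g i) m]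
  simp only [Nat.choose_succ_succ', Nat.cast_add, add_mul, sum_add_distrib, sum_range_succ _ m,
    Nat.choose_succ_self, Nat.choose_zero_right]
  push_cast
  ring

theorem sum_range_choose_mul_neg_one_pow_div (m : ℕ) {x : ℝ} (hx : 0 < x) :
    ∑ i ∈ range (m + 1), (m.choose i : ℝ) * ((-1) ^ i / (x + i)) =
      m ! / (ascPochhammer ℝ (m + 1)).eval x := by
  induction m generalizing x with
  | zero => simp
  | succ m ih =>
    have hshift : ∀ i : ℕ,
        (-1 : ℝ) ^ (i + 1) / (x + (i + 1 : ℕ)) = -((-1) ^ i / (x + 1 + i)) := by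
      intro i
      push_cast
      ring_nf
    have hleft : (ascPochhammer ℝ (m + 2)).eval x =
        x * (ascPochhammer ℝ (m + 1)).eval (x + 1) := by
      simp [ascPochhammer_succ_left _ (m + 1)]
    have hright : (ascPochhammer ℝ (m + 2)).eval x =
        (ascPochhammer ℝ (m + 1)).eval x * (x + (m + 1)) := by
      rw [ascPochhammer_succ_eval]
      push_cast
      ring
    rw [sum_range_succ_choose_mul, ih hx]
    simp only [hshift, mul_neg, sum_neg_distrib, ih (by positivity : 0 < x + 1)]
    have hA := (ascPochhammer_pos (m + 1) x hx).ne'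
    have hB := (ascPochhammer_pos (m + 1) (x + 1) (by positivity)).ne'
    rw [Nat.factorial_succ, Nat.cast_mul, Nat.cast_succ, hright]
    field_simp
    linear_combination hleft.symm.trans hright

theorem sum_range_choose_mul_neg_one_pow_mul_div_eq_Gamma (m : ℕ) {x : ℝ} (hx : 0 < x) :
    ∑ i ∈ range (m + 1), (m.choose i : ℝ) * (-1) ^ i * (x / (x + i)) =
      Real.Gamma (x + 1) * Real.Gamma ((m : ℝ) + 1) / Real.Gamma (x + m + 1) := by
  have hΓ : Real.Gamma (x + m + 1) = Real.Gamma x * (ascPochhammer ℝ (m + 1)).eval x := by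
    rw [← Gamma_add_nat_eq_mul_ascPochhammer hx]
    push_cast
    ring_nf
  have hΓx := (Real.Gamma_pos_of_pos hx).ne'
  rw [hΓ, Real.Gamma_add_one hx.ne', Real.Gamma_nat_eq_factorial, mul_assoc, mul_div_assoc,
    mul_div_mul_left _ _ hΓx, ← sum_range_choose_mul_neg_one_pow_div m hx, mul_sum]
  refine sum_congr rfl fun i _ => ?_
  ring

lemma sum_range_choose_mul_quarter_pow_eq_Gamma {ν : ℝ} (hν : 0 < ν) (m : ℕ) :
    ∑ i ∈ range (m + 1), (m.choose i : ℝ) * (-1) ^ i *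
      ((1 / 4) ^ (m - i) * (2 * ν / (2 * ν + (2 * i : ℕ)) * (1 / 4) ^ i)) =
      Real.Gamma (ν + 1) * Real.Gamma ((m : ℝ) + 1) / (4 ^ m * Real.Gamma (ν + m + 1)) := by
  rw [mul_comm ((4 : ℝ) ^ m), ← div_div,
    ← sum_range_choose_mul_neg_one_pow_mul_div_eq_Gamma m hν, sum_div]
  refine sum_congr rfl fun i hi => ?_
  have hpow : (1 / 4 : ℝ) ^ (m - i) * (1 / 4) ^ i = 1 / 4 ^ m := by
    rw [← pow_add, Nat.sub_add_cancel (Nat.lt_succ_iff.mp (mem_range.mp hi)), one_div_pow]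
  have hfrac : 2 * ν / (2 * ν + (2 * i : ℕ)) = ν / (ν + i) := by
    push_cast
    rw [← mul_add, mul_div_mul_left _ _ two_ne_zero]
  rw [hfrac, mul_left_comm _ (ν / (ν + i)), hpow]
  ring

lemma sum_range_reflect_mul_pow {K : Type*} [Field K] (w : ℕ → K) (c D : K) (n m : ℕ) :
    ∑ k ∈ range (n + 1), w (n - k) * ((k : K) * (2 * n - k + 2 * c) / D) ^ m =
      ∑ i ∈ range (m + 1), (m.choose i : K) * (-1) ^ i * ((((n : K) + c) ^ 2 / D) ^ (m - i) *
        ((∑ j ∈ range (n + 1), w j * ((j : K) + c) ^ (2 * i)) / D ^ i)) := by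
  have hdiff : ∀ j ≤ n, ((n - j : ℕ) : K) * (2 * n - (n - j : ℕ) + 2 * c) / D =
      -(((j : K) + c) ^ 2 / D) + ((n : K) + c) ^ 2 / D := by
    intro j hj
    rw [Nat.cast_sub hj]
    ring
  rw [← sum_range_reflect]
  simp only [Nat.add_sub_cancel]
  rw [sum_congr rfl fun j hj => by
    rw [Nat.sub_sub_self (Nat.lt_succ_iff.mp (mem_range.mp hj)),
      hdiff j (Nat.lt_succ_iff.mp (mem_range.mp hj)), add_pow, mul_sum]]
  rw [sum_comm]
  refine sum_congr rfl fun i _ => ?_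
  rw [sum_div, mul_sum, mul_sum]
  refine sum_congr rfl fun j _ => ?_
  rw [neg_pow, div_pow, ← pow_mul]
  ring

lemma tendsto_natCast_add_div_natCast_add (a b : ℝ) :
    Tendsto (fun n : ℕ => ((n : ℝ) + a) / (n + b)) atTop (𝓝 1) := by
  have hdeg : (X + C a).degree = (X + C b).degree := by rw [degree_X_add_C, degree_X_add_C]
  simpa [Function.comp_def] using
    (div_tendsto_atTop_leadingCoeff_div_of_degree_eq _ _ hdeg).comp tendsto_natCast_atTop_atTop

lemma tendsto_natCast_add_sq_div (a b : ℝ) :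
    Tendsto (fun n : ℕ => ((n : ℝ) + a) ^ 2 / (4 * ((n : ℝ) + b - 1) * (n + b)))
      atTop (𝓝 (1 / 4)) := by
  have h := ((tendsto_natCast_add_div_natCast_add a (b - 1)).mul
    (tendsto_natCast_add_div_natCast_add a b)).div_const 4
  rw [one_mul] at h
  refine h.congr fun n => ?_
  rw [div_mul_div_comm, div_div]
  congr 1 <;> ring

theorem stmt13_general (ν : ℝ) (hν : 0 < ν) (lam : ℝ)
    (m : ℕ)
    (σG : ℕ → ℝ) (hσG0 : σG 0 = 1)
    (hσG : ∀ j : ℕ, 1 ≤ j → σG j =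
      (2*(j:ℝ)+2*ν-1) * Real.Gamma ((j:ℝ)+2*ν-1) /
        (Real.Gamma (2*ν) * Real.Gamma ((j:ℝ)+1)))
    (τG : ℕ → ℝ) (hτG : ∀ n : ℕ, τG n =
      Real.Gamma (2*ν+1) * Real.Gamma ((n:ℝ)+1) /
        ((2*(n:ℝ)+2*ν) * Real.Gamma ((n:ℝ)+2*ν)))
    :
    Filter.Tendsto (fun n : ℕ => ∑ k ∈ Finset.range (n+1),
      τG n * σG (n-k) *
      (((k:ℝ) * (2*(n:ℝ) - (k:ℝ) + 2*lam - 1)) / (4*((n:ℝ)+lam-1)*((n:ℝ)+lam)))^m)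
      Filter.atTop
      (nhds (Real.Gamma (ν+1) * Real.Gamma ((m:ℝ)+1) / (4^m * Real.Gamma (ν+(m:ℝ)+1)))) := by
  obtain rfl : σG = gegenbauerSigma ν := by
    funext j
    rcases j with _ | j
    · simp [gegenbauerSigma, hσG0]
    · rw [hσG _ j.succ_pos, gegenbauerSigma, if_neg j.succ_ne_zero]
  obtain rfl : τG = gegenbauerTau ν := funext hτG
  have hterm : ∀ i ∈ range (m + 1), Tendsto (fun n : ℕ => (m.choose i : ℝ) * (-1) ^ i *
      ((((n : ℝ) + (lam - 1 / 2)) ^ 2 / (4 * ((n : ℝ) + lam - 1) * (n + lam))) ^ (m - i) *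
        (gegenbauerTau ν n * (∑ j ∈ range (n + 1), gegenbauerSigma ν j *
          ((j : ℝ) + (lam - 1 / 2)) ^ (2 * i)) / (n : ℝ) ^ (2 * i) *
        (((n : ℝ) + 0) ^ 2 / (4 * ((n : ℝ) + lam - 1) * (n + lam))) ^ i)))
      atTop (𝓝 ((m.choose i : ℝ) * (-1) ^ i *
        ((1 / 4) ^ (m - i) * (2 * ν / (2 * ν + (2 * i : ℕ)) * (1 / 4) ^ i)))) := fun i _ =>
    tendsto_const_nhds.mul (((tendsto_natCast_add_sq_div _ _).pow _).mul
      ((tendsto_gegenbauerTau_mul_sum_add_pow hν _ _).mul ((tendsto_natCast_add_sq_div _ _).pow _)))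
  rw [← sum_range_choose_mul_quarter_pow_eq_Gamma hν m]
  refine (tendsto_finsetSum _ hterm).congr' ?_
  filter_upwards [eventually_ne_atTop 0] with n hn
  have hc : ∀ k : ℕ, 2 * (n : ℝ) - k + 2 * lam - 1 = 2 * n - k + 2 * (lam - 1 / 2) :=
    fun k => by ring
  simp only [hc, sum_range_reflect_mul_pow (fun j => gegenbauerTau ν n * gegenbauerSigma ν j)]
  refine sum_congr rfl fun i _ => ?_
  simp only [add_zero, mul_assoc, ← mul_sum]
  rw [div_pow ((n : ℝ) ^ 2), ← pow_mul,
    div_mul_div_cancel₀ (pow_ne_zero _ (Nat.cast_ne_zero.mpr hn))]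

theorem stmt13 (ν : ℝ) (hν : 0 < ν) (lam : ℝ) (hlam : -(1/2) < lam)
    (m : ℕ) (hm : 1 ≤ m)
    (σG : ℕ → ℝ) (hσG0 : σG 0 = 1)
    (hσG : ∀ j : ℕ, 1 ≤ j → σG j =
      (2*(j:ℝ)+2*ν-1) * Real.Gamma ((j:ℝ)+2*ν-1) /
        (Real.Gamma (2*ν) * Real.Gamma ((j:ℝ)+1)))
    (τG : ℕ → ℝ) (hτG : ∀ n : ℕ, τG n =
      Real.Gamma (2*ν+1) * Real.Gamma ((n:ℝ)+1) /
        ((2*(n:ℝ)+2*ν) * Real.Gamma ((n:ℝ)+2*ν)))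
    :
    Filter.Tendsto (fun n : ℕ => ∑ k ∈ Finset.range (n+1),
      τG n * σG (n-k) *
      (((k:ℝ) * (2*(n:ℝ) - (k:ℝ) + 2*lam - 1)) / (4*((n:ℝ)+lam-1)*((n:ℝ)+lam)))^m)
      Filter.atTop
      (nhds (Real.Gamma (ν+1) * Real.Gamma ((m:ℝ)+1) / (4^m * Real.Gamma (ν+(m:ℝ)+1)))) :=
  stmt13_general ν hν lam m σG hσG0 hσG τG hτG
end

section
/- For each integer q ≥ 0 define the orthonormal polynomials p_j^(q) of the measure (1−x²)^q dx on [−1,1] by p_{−1}^(q) = 0, p_0^(q) = ( ∫_{−1}^1 (1−x²)^q dx )^{−1/2}, and the recurrence x p_j^(q)(x) = b_{j+1}^(q) p_{j+1}^(q)(x) + b_j^(q) p_{j−1}^(q)(x), where b_j^(q) = (1/2)√( j(j + 2q) / ( (j+q−1/2)(j+q+1/2) ) ). Then for every n ∈ ℕ and every x ∈ [−1,1], (2n+1)/2 = ( p_n^(0)(x) )² + 2 Σ_{k=1}^n (1−x²)^k ( p_{n−k}^(k)(x) )². -/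
/-!
Let `P_n` be the Legendre polynomials. Differentiating Bonnet's recurrence `q` times gives a
three-term recurrence for `P_{j+q}^{(q)}` which, after normalization, is the one defining
`p_j^{(q)}`; since such a recurrence determines its solution from the initial term,
`p_{n-k}^{(k)}` is a multiple of `P_n^{(k)}`, and the claim becomes the classical identity
`P_n² + 2 ∑_{k=1}^n (n-k)!/(n+k)! (1-x²)^k (P_n^{(k)})² = 1`.
Its left side is constant: for `y = P_n^{(k)}` the differentiated Legendre equation
`(1-x²) y'' = 2(k+1) x y' - (n(n+1) - k(k+1)) y` makes the derivatives of the summands telescope,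
and at `x = 1` only `P_n(1)² = 1` survives.
-/

open MeasureTheory Polynomial

noncomputable def legendre : ℕ → ℝ[X]
  | 0 => 1
  | 1 => X
  | n + 2 =>
    C ((n + 2 : ℝ)⁻¹) *
      (C (2 * n + 3 : ℝ) * X * legendre (n + 1) - C (n + 1 : ℝ) * legendre n)

theorem legendre_recurrence (n : ℕ) :
    ((n : ℝ[X]) + 1) * legendre (n + 1) =
      (2 * (n : ℝ[X]) + 1) * X * legendre n - (n : ℝ[X]) * legendre (n - 1) := by
  cases n with
  | zero => simp [legendre]
  | succ m =>
    have hunit : (m + 2 : ℝ[X]) * C ((m + 2 : ℝ)⁻¹) = 1 := by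
      rw [show (m + 2 : ℝ[X]) = C (m + 2 : ℝ) by simp; rfl, ← C_mul,
        mul_inv_cancel₀ (by positivity), C_1]
    simp only [legendre, Nat.add_sub_cancel, map_add, map_mul, map_natCast, map_ofNat, map_one]
    push_cast
    linear_combination ((2 * m + 3) * X * legendre (m + 1) - (m + 1) * legendre m) * hunit

theorem natDegree_legendre_le (n : ℕ) : (legendre n).natDegree ≤ n := by
  induction n using legendre.induct with
  | case1 => simp [legendre]
  | case2 => simp [legendre]
  | case3 n ih₁ ih₀ =>
    rw [legendre]
    refine (natDegree_C_mul_le _ _).trans ((natDegree_sub_le _ _).trans (max_le ?_ ?_))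
    · have hX : (C (2 * n + 3 : ℝ) * X).natDegree ≤ 1 :=
        (natDegree_C_mul_le _ _).trans natDegree_X_le
      exact (natDegree_mul_le_of_le hX ih₁).trans (by omega : 1 + (n + 1) ≤ n + 2)
    · exact (natDegree_C_mul_le _ _).trans (by omega)

theorem legendre_eval_one (n : ℕ) : (legendre n).eval 1 = 1 := by
  induction n using legendre.induct with
  | case1 => simp [legendre]
  | case2 => simp [legendre]
  | case3 n ih₁ ih₀ =>
    simp only [legendre, eval_mul, eval_sub, eval_C, eval_X, ih₀, ih₁]
    field_simp
    ring

theorem coeff_legendre_self (n : ℕ) :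
    (legendre n).coeff n = (2 * n).factorial / (2 ^ n * n.factorial ^ 2) := by
  induction n with
  | zero => simp [legendre]
  | succ m ih =>
    have h := congrArg (fun f : ℝ[X] => f.coeff (m + 1)) (legendre_recurrence m)
    have hlow : (legendre (m - 1)).coeff (m + 1) = 0 :=
      coeff_eq_zero_of_natDegree_lt ((natDegree_legendre_le _).trans_lt (by omega))
    simp only [← C_eq_natCast, ← C_ofNat, ← C_1, ← C_add, ← C_mul, coeff_C_mul, coeff_sub,
      mul_assoc, coeff_X_mul, hlow, ih, mul_zero, sub_zero] at h
    rw [show 2 * (m + 1) = 2 * m + 1 + 1 by ring, Nat.factorial_succ, Nat.factorial_succ,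
      Nat.factorial_succ] at *
    push_cast at h ⊢
    field_simp at h ⊢
    linear_combination (2 * (m : ℝ) + 2) * h

theorem derivative_legendre_succ_of_X_mul {n : ℕ}
    (h : X * derivative (legendre n) = (n : ℝ[X]) * legendre n + derivative (legendre (n - 1))) :
    derivative (legendre (n + 1)) =
      (2 * (n : ℝ[X]) + 1) * legendre n + derivative (legendre (n - 1)) := by
  have hd := congrArg derivative (legendre_recurrence n)
  simp only [derivative_mul, derivative_add, derivative_natCast, derivative_ofNat, derivative_one,
    derivative_X, derivative_sub] at hd
  apply mul_left_cancel₀ (Nat.cast_add_one_ne_zero n : (n : ℝ[X]) + 1 ≠ 0)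
  linear_combination hd + (2 * (n : ℝ[X]) + 1) * h

theorem X_mul_derivative_legendre (n : ℕ) :
    X * derivative (legendre n) = (n : ℝ[X]) * legendre n + derivative (legendre (n - 1)) := by
  induction n using Nat.twoStepInduction with
  | zero => simp [legendre]
  | one => simp [legendre]
  | more m h₀ h₁ =>
    have e₁ := derivative_legendre_succ_of_X_mul h₀
    have e₂ := derivative_legendre_succ_of_X_mul h₁
    have r := legendre_recurrence (m + 1)
    simp only [Nat.add_sub_cancel] at e₂ r h₁ ⊢
    push_cast at e₂ r ⊢
    linear_combination X * e₂ + h₀ - r - e₁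

theorem derivative_legendre_succ (n : ℕ) :
    derivative (legendre (n + 1)) =
      (2 * (n : ℝ[X]) + 1) * legendre n + derivative (legendre (n - 1)) :=
  derivative_legendre_succ_of_X_mul (X_mul_derivative_legendre n)

theorem one_sub_X_sq_mul_derivative_legendre (n : ℕ) :
    (1 - X ^ 2) * derivative (legendre n) =
      (n : ℝ[X]) * legendre (n - 1) - (n : ℝ[X]) * (X * legendre n) := by
  cases n with
  | zero => simp [legendre]
  | succ m =>
    have a := derivative_legendre_succ m
    have b := X_mul_derivative_legendre m
    have b' := X_mul_derivative_legendre (m + 1)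
    simp only [Nat.add_sub_cancel] at b' ⊢
    push_cast at b' ⊢
    linear_combination a - b - X * b'

theorem legendre_ode (n : ℕ) :
    (1 - X ^ 2) * derivative (derivative (legendre n)) =
      2 * X * derivative (legendre n) - C ((n : ℝ) * (n + 1)) * legendre n := by
  have h := congrArg derivative (one_sub_X_sq_mul_derivative_legendre n)
  simp only [derivative_mul, derivative_sub, derivative_one, derivative_X_pow, derivative_natCast,
    derivative_X, Nat.cast_ofNat, map_ofNat] at h
  simp only [map_mul, map_add, map_natCast, map_one]
  linear_combination h - (n : ℝ[X]) * X_mul_derivative_legendre n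

theorem one_sub_X_sq_mul_iterate_derivative_of_ode {R : Type*} [CommRing R] {f : R[X]} {c : R}
    (h : (1 - X ^ 2) * derivative (derivative f) = 2 * X * derivative f - C c * f) (k : ℕ) :
    (1 - X ^ 2) * derivative^[k + 2] f =
      2 * ((k : R[X]) + 1) * X * derivative^[k + 1] f -
        (C c - (k : R[X]) * ((k : R[X]) + 1)) * derivative^[k] f := by
  induction k with
  | zero => simpa using h
  | succ k ih =>
    have hd := congrArg derivative ih
    simp only [Function.iterate_succ_apply'] at hd ⊢
    simp only [derivative_mul, derivative_sub, derivative_add, derivative_one, derivative_X_pow,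
      derivative_natCast, derivative_ofNat, derivative_X, derivative_C, Nat.cast_ofNat,
      map_ofNat] at hd
    push_cast
    linear_combination hd

theorem iterate_derivative_legendre_succ (q n : ℕ) :
    derivative^[q + 1] (legendre (n + 1)) =
      (2 * (n : ℝ[X]) + 1) * derivative^[q] (legendre n) +
        derivative^[q + 1] (legendre (n - 1)) := by
  have h := congrArg (derivative^[q]) (derivative_legendre_succ n)
  rw [show (2 * (n : ℝ[X]) + 1) = C (2 * n + 1 : ℝ) by
      rw [map_add, map_mul, map_natCast, map_ofNat, map_one],
    iterate_map_add, iterate_derivative_C_mul] at h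
  simpa only [← Function.iterate_succ_apply, map_add, map_mul, map_natCast, map_ofNat, map_one]
    using h

theorem iterate_derivative_legendre_recurrence (q n : ℕ) :
    (2 * (n : ℝ[X]) + 1) * X * derivative^[q] (legendre n) =
      ((n : ℝ[X]) + 1 - (q : ℝ[X])) * derivative^[q] (legendre (n + 1)) +
        ((n : ℝ[X]) + (q : ℝ[X])) * derivative^[q] (legendre (n - 1)) := by
  induction q with
  | zero =>
    simp only [Function.iterate_zero_apply, Nat.cast_zero, sub_zero, add_zero]
    linear_combination -legendre_recurrence n
  | succ q ih =>
    have hd := congrArg derivative ih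
    simp only [derivative_mul, derivative_add, derivative_sub, derivative_natCast,
      derivative_ofNat, derivative_one, derivative_X, ← Function.iterate_succ_apply'] at hd
    push_cast
    linear_combination hd + iterate_derivative_legendre_succ q n

theorem iterate_derivative_legendre_eq_zero {n k : ℕ} (h : n < k) :
    derivative^[k] (legendre n) = 0 :=
  iterate_derivative_eq_zero ((natDegree_legendre_le n).trans_lt h)

theorem iterate_derivative_legendre_self (q : ℕ) :
    derivative^[q] (legendre q) = C (((2 * q).factorial : ℝ) / (2 ^ q * q.factorial)) := by
  have hdeg : (derivative^[q] (legendre q)).natDegree = 0 :=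
    Nat.eq_zero_of_le_zero ((natDegree_iterate_derivative _ _).trans
      (by have := natDegree_legendre_le q; omega))
  rw [eq_C_of_natDegree_eq_zero hdeg, coeff_iterate_derivative, zero_add,
    Nat.descFactorial_self, coeff_legendre_self, nsmul_eq_mul]
  have := q.factorial_pos
  field_simp

noncomputable def legendreWeight (n k : ℕ) : ℝ := (n - k).factorial / (n + k).factorial

theorem legendreWeight_zero (n : ℕ) : legendreWeight n 0 = 1 := by
  simp [legendreWeight, Nat.factorial_ne_zero]

theorem legendreWeight_succ_mul {n k : ℕ} (hk : k < n) :
    legendreWeight n (k + 1) * ((n : ℝ) * (n + 1) - k * (k + 1)) = legendreWeight n k := by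
  obtain ⟨d, rfl⟩ : ∃ d, n = k + d + 1 := ⟨n - k - 1, by omega⟩
  rw [legendreWeight, legendreWeight, show k + d + 1 - (k + 1) = d by omega,
    show k + d + 1 - k = d + 1 by omega, show k + d + 1 + (k + 1) = k + d + 1 + k + 1 by omega,
    Nat.factorial_succ (k + d + 1 + k), Nat.factorial_succ d]
  have := (k + d + 1 + k).factorial_pos
  push_cast
  field_simp
  ring

noncomputable def assocLegendreSq (n k : ℕ) : ℝ[X] :=
  (1 - X ^ 2) ^ k * (derivative^[k] (legendre n)) ^ 2

theorem derivative_C_legendreWeight_mul_assocLegendreSq {n k : ℕ} (hk : k < n) :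
    derivative (C (legendreWeight n (k + 1)) * assocLegendreSq n (k + 1)) =
      C (legendreWeight n (k + 1)) * ((1 - X ^ 2) ^ (k + 1) *
          (derivative^[k + 1] (legendre n) * derivative^[k + 2] (legendre n))) -
        C (legendreWeight n k) * ((1 - X ^ 2) ^ k *
          (derivative^[k] (legendre n) * derivative^[k + 1] (legendre n))) := by
  have hode := one_sub_X_sq_mul_iterate_derivative_of_ode (legendre_ode n) k
  have hweight := congrArg C (legendreWeight_succ_mul hk)
  simp only [map_mul, map_sub, map_add, map_natCast, map_one] at hweight
  rw [assocLegendreSq, ← hweight]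
  simp only [Function.iterate_succ_apply'] at hode ⊢
  simp only [derivative_mul, derivative_C, derivative_pow, derivative_sub, derivative_one,
    derivative_X, Nat.cast_ofNat, map_ofNat, Nat.add_sub_cancel]
  simp only [Nat.cast_add, Nat.cast_one, map_add, map_mul, map_natCast, map_one] at hode ⊢
  linear_combination C (legendreWeight n (k + 1)) * (1 - X ^ 2) ^ k *
    derivative (derivative^[k] (legendre n)) * hode

theorem derivative_legendre_sq_add_two_mul_sum_assocLegendreSq (n : ℕ) :
    derivative (legendre n ^ 2 +
      2 * ∑ k ∈ Finset.Icc 1 n, C (legendreWeight n k) * assocLegendreSq n k) = 0 := by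
  set T : ℕ → ℝ[X] := fun k => C (legendreWeight n k) * ((1 - X ^ 2) ^ k *
    (derivative^[k] (legendre n) * derivative^[k + 1] (legendre n))) with hT
  have hT₀ : derivative (legendre n ^ 2) = 2 * T 0 := by
    simp only [hT, derivative_sq, legendreWeight_zero, C_1, pow_zero, Function.iterate_succ_apply',
      Function.iterate_zero_apply, one_mul, map_ofNat]
    ring
  have hTn : T n = 0 := by
    simp only [hT, iterate_derivative_legendre_eq_zero (Nat.lt_succ_self n), mul_zero]
  have hshift : ∑ k ∈ Finset.Icc 1 n, C (legendreWeight n k) * assocLegendreSq n k =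
      ∑ k ∈ Finset.range n, C (legendreWeight n (k + 1)) * assocLegendreSq n (k + 1) := by
    rw [Finset.range_eq_Ico, Finset.sum_Ico_add' (fun k => C (legendreWeight n k) *
      assocLegendreSq n k) 0 n 1, zero_add, Finset.Ico_add_one_right_eq_Icc]
  rw [hshift, derivative_add, derivative_mul, derivative_sum, hT₀,
    Finset.sum_congr rfl fun k hk => derivative_C_legendreWeight_mul_assocLegendreSq
      (Finset.mem_range.mp hk), Finset.sum_range_sub T n, hTn, derivative_ofNat]
  ring

theorem eval_one_legendre_sq_add_two_mul_sum_assocLegendreSq (n : ℕ) :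
    (legendre n ^ 2 +
      2 * ∑ k ∈ Finset.Icc 1 n, C (legendreWeight n k) * assocLegendreSq n k).eval 1 = 1 := by
  have hvanish : ∀ k ∈ Finset.Icc 1 n,
      (C (legendreWeight n k) * assocLegendreSq n k).eval 1 = 0 := by
    intro k hk
    have : k ≠ 0 := by simp at hk; omega
    simp [assocLegendreSq, this]
  rw [eval_add, eval_mul, eval_finsetSum, Finset.sum_eq_zero hvanish, eval_pow, legendre_eval_one]
  simp

theorem legendre_sq_add_two_mul_sum_assocLegendreSq_eq_one (n : ℕ) :
    legendre n ^ 2 + 2 * ∑ k ∈ Finset.Icc 1 n, C (legendreWeight n k) * assocLegendreSq n k =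
      1 := by
  have hconst :=
    eq_C_of_derivative_eq_zero (derivative_legendre_sq_add_two_mul_sum_assocLegendreSq n)
  have hone := eval_one_legendre_sq_add_two_mul_sum_assocLegendreSq n
  rw [hconst, eval_C] at hone
  rw [hconst, hone, C_1]

theorem integral_one_sub_sq_pow_succ (m : ℕ) :
    ∫ x in (-1 : ℝ)..1, (1 - x ^ 2) ^ (m + 1) =
      (2 * (m : ℝ) + 2) / (2 * m + 3) * ∫ x in (-1 : ℝ)..1, (1 - x ^ 2) ^ m := by
  have hderiv : ∀ x : ℝ, HasDerivAt (fun x => x * (1 - x ^ 2) ^ (m + 1))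
      ((2 * m + 3) * (1 - x ^ 2) ^ (m + 1) - (2 * m + 2) * (1 - x ^ 2) ^ m) x := by
    intro x
    refine ((hasDerivAt_id' x).fun_mul
      (((hasDerivAt_pow 2 x).const_sub 1).fun_pow (m + 1))).congr_deriv ?_
    simp only [Nat.add_sub_cancel, Nat.cast_ofNat, Nat.cast_add, Nat.cast_one]
    ring
  have hintegrable (k : ℕ) :
      IntervalIntegrable (fun x : ℝ => (1 - x ^ 2) ^ k) volume (-1) 1 := by
    apply Continuous.intervalIntegrable
    fun_prop
  have hftc := intervalIntegral.integral_eq_sub_of_hasDerivAt (fun x _ => hderiv x)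
    (((hintegrable _).const_mul _).sub ((hintegrable _).const_mul _))
  rw [intervalIntegral.integral_sub ((hintegrable _).const_mul _) ((hintegrable _).const_mul _),
    intervalIntegral.integral_const_mul, intervalIntegral.integral_const_mul] at hftc
  norm_num at hftc
  field_simp
  linear_combination hftc

theorem integral_one_sub_sq_pow (q : ℕ) :
    ∫ x in (-1 : ℝ)..1, (1 - x ^ 2) ^ q =
      2 * 4 ^ q * (q.factorial : ℝ) ^ 2 / (2 * q + 1).factorial := by
  induction q with
  | zero => norm_num
  | succ m ih =>
    rw [integral_one_sub_sq_pow_succ, ih, show 2 * (m + 1) + 1 = 2 * m + 1 + 1 + 1 by ring,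
      Nat.factorial_succ (2 * m + 1 + 1), Nat.factorial_succ (2 * m + 1), Nat.factorial_succ m]
    have := (2 * m + 1).factorial_pos
    push_cast
    field_simp
    ring

noncomputable def jacobiCoeff (q j : ℕ) : ℝ :=
  1 / 2 * Real.sqrt ((j : ℝ) * (j + 2 * q) / ((j + q - 1 / 2) * (j + q + 1 / 2)))

theorem jacobiCoeff_zero (q : ℕ) : jacobiCoeff q 0 = 0 := by
  simp [jacobiCoeff]

theorem jacobiCoeff_succ (q j : ℕ) :
    jacobiCoeff q (j + 1) =
      Real.sqrt ((j + 1) * (j + 1 + 2 * q) / ((2 * j + 2 * q + 1) * (2 * j + 2 * q + 3))) := by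
  rw [jacobiCoeff,
    show ((j + 1 : ℕ) : ℝ) + q - 1 / 2 = (2 * j + 2 * q + 1) / 2 by push_cast; ring,
    show ((j + 1 : ℕ) : ℝ) + q + 1 / 2 = (2 * j + 2 * q + 3) / 2 by push_cast; ring,
    show (1 / 2 : ℝ) = Real.sqrt (1 / 4) by
      rw [show (1 / 4 : ℝ) = (1 / 2) ^ 2 by norm_num, Real.sqrt_sq (by norm_num)],
    ← Real.sqrt_mul (by norm_num)]
  congr 1
  push_cast
  field_simp
  ring

theorem jacobiCoeff_succ_sq (q j : ℕ) :
    jacobiCoeff q (j + 1) ^ 2 =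
      (j + 1) * (j + 1 + 2 * q) / ((2 * j + 2 * q + 1) * (2 * j + 2 * q + 3)) := by
  rw [jacobiCoeff_succ, Real.sq_sqrt (by positivity)]

theorem jacobiCoeff_succ_pos (q j : ℕ) : 0 < jacobiCoeff q (j + 1) := by
  rw [jacobiCoeff_succ]
  positivity

/-- The reciprocal of the norm of `P_{j+q}^{(q)}` in `L²((1 - x²)^q dx)`. -/
noncomputable def normConst (q j : ℕ) : ℝ :=
  Real.sqrt ((2 * ((j + q : ℕ) : ℝ) + 1) / 2 * legendreWeight (j + q) q)

theorem normConst_sq (q j : ℕ) :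
    normConst q j ^ 2 = (2 * ((j + q : ℕ) : ℝ) + 1) / 2 * legendreWeight (j + q) q :=
  Real.sq_sqrt (by unfold legendreWeight; positivity)

theorem legendreWeight_add_self (j q : ℕ) :
    legendreWeight (j + q) q = j.factorial / (j + 2 * q).factorial := by
  rw [legendreWeight, Nat.add_sub_cancel, add_assoc, ← two_mul]

theorem normConst_nonneg (q j : ℕ) : 0 ≤ normConst q j := Real.sqrt_nonneg _

theorem normConst_sq_eq_factorial (q j : ℕ) :
    normConst q j ^ 2 = (2 * j + 2 * q + 1) / 2 * (j.factorial / (j + 2 * q).factorial) := by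
  rw [normConst_sq, legendreWeight_add_self]
  push_cast
  ring

theorem normConst_succ_sq (q j : ℕ) :
    normConst q (j + 1) ^ 2 = (2 * j + 2 * q + 3) / 2 *
      ((j + 1) * j.factorial / ((j + 2 * q + 1) * (j + 2 * q).factorial)) := by
  rw [normConst_sq_eq_factorial, show j + 1 + 2 * q = j + 2 * q + 1 by omega,
    Nat.factorial_succ (j + 2 * q), Nat.factorial_succ j]
  push_cast
  ring

theorem jacobiCoeff_succ_mul_normConst_succ (q j : ℕ) :
    jacobiCoeff q (j + 1) * normConst q (j + 1) * (2 * j + 2 * q + 1) =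
      normConst q j * (j + 1) := by
  have := (jacobiCoeff_succ_pos q j).le
  refine (sq_eq_sq₀ (by have := normConst_nonneg q (j + 1); positivity)
    (by have := normConst_nonneg q j; positivity)).mp ?_
  rw [mul_pow, mul_pow, mul_pow, jacobiCoeff_succ_sq, normConst_succ_sq, normConst_sq_eq_factorial]
  have := (j + 2 * q).factorial_pos
  field_simp
  ring

theorem jacobiCoeff_succ_mul_normConst (q j : ℕ) :
    jacobiCoeff q (j + 1) * normConst q j * (2 * j + 2 * q + 3) =
      normConst q (j + 1) * (j + 1 + 2 * q) := by
  have := (jacobiCoeff_succ_pos q j).le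
  refine (sq_eq_sq₀ (by have := normConst_nonneg q j; positivity)
    (by have := normConst_nonneg q (j + 1); positivity)).mp ?_
  rw [mul_pow, mul_pow, mul_pow, jacobiCoeff_succ_sq, normConst_succ_sq, normConst_sq_eq_factorial]
  have := (j + 2 * q).factorial_pos
  field_simp
  ring

theorem normConst_zero_mul_eq_one_div_sqrt_integral (q : ℕ) :
    normConst q 0 * ((2 * q).factorial / (2 ^ q * q.factorial)) =
      1 / Real.sqrt (∫ x in (-1 : ℝ)..1, (1 - x ^ 2) ^ q) := by
  have := q.factorial_pos
  have := (2 * q).factorial_pos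
  refine (sq_eq_sq₀ (by have := normConst_nonneg q 0; positivity) (by positivity)).mp ?_
  rw [one_div, inv_pow, Real.sq_sqrt (by rw [integral_one_sub_sq_pow]; positivity),
    integral_one_sub_sq_pow, mul_pow, normConst_sq_eq_factorial, Nat.factorial_succ,
    show (4 : ℝ) ^ q = 2 ^ q * 2 ^ q by rw [← mul_pow]; norm_num]
  simp only [Nat.cast_zero, zero_add, Nat.factorial_zero, Nat.cast_one, mul_zero]
  push_cast
  field_simp

theorem eq_of_three_term_recurrence {R : Type*} [CommRing R] [IsDomain R] {a : ℕ → R}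
    (ha : ∀ j, a (j + 1) ≠ 0) {f g : ℕ → R[X]}
    (hf : ∀ j, X * f j = C (a (j + 1)) * f (j + 1) + C (a j) * f (j - 1))
    (hg : ∀ j, X * g j = C (a (j + 1)) * g (j + 1) + C (a j) * g (j - 1))
    (h0 : f 0 = g 0) : f = g := by
  have step (j : ℕ) (h : f j = g j) (h' : f (j - 1) = g (j - 1)) : f (j + 1) = g (j + 1) := by
    apply mul_left_cancel₀ (C_ne_zero.mpr (ha j))
    linear_combination (hg j) - (hf j) + X * h - C (a j) * h'
  have hpair (j : ℕ) : f j = g j ∧ f (j + 1) = g (j + 1) := by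
    induction j with
    | zero => exact ⟨h0, step 0 h0 h0⟩
    | succ j ih => exact ⟨ih.2, step (j + 1) ih.2 ih.1⟩
  exact funext fun j => (hpair j).1

noncomputable def orthonormalGegenbauer (q j : ℕ) : ℝ[X] :=
  C (normConst q j) * derivative^[q] (legendre (j + q))

theorem orthonormalGegenbauer_zero (q : ℕ) :
    orthonormalGegenbauer q 0 = C (1 / Real.sqrt (∫ x in (-1 : ℝ)..1, (1 - x ^ 2) ^ q)) := by
  rw [orthonormalGegenbauer, zero_add, iterate_derivative_legendre_self, ← C_mul,
    normConst_zero_mul_eq_one_div_sqrt_integral]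

theorem X_mul_orthonormalGegenbauer (q j : ℕ) :
    X * orthonormalGegenbauer q j =
      C (jacobiCoeff q (j + 1)) * orthonormalGegenbauer q (j + 1) +
        C (jacobiCoeff q j) * orthonormalGegenbauer q (j - 1) := by
  have hrec := iterate_derivative_legendre_recurrence q (j + q)
  have hA := congrArg C (jacobiCoeff_succ_mul_normConst_succ q j)
  simp only [map_mul, map_add, map_natCast, map_ofNat, map_one] at hA
  simp only [orthonormalGegenbauer, show j + 1 + q = j + q + 1 by omega]
  apply mul_left_cancel₀
    (Nat.cast_add_one_ne_zero (2 * j + 2 * q) : ((2 * j + 2 * q : ℕ) : ℝ[X]) + 1 ≠ 0)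
  cases j with
  | zero =>
    have hlow : ((q : ℝ[X]) + q) * derivative^[q] (legendre (q - 1)) = 0 := by
      cases q with
      | zero => simp
      | succ q => rw [iterate_derivative_legendre_eq_zero (by omega), mul_zero]
    simp only [zero_add, Nat.cast_zero, jacobiCoeff_zero, map_zero, zero_mul, add_zero]
      at hrec hA hlow ⊢
    push_cast at hrec hA ⊢
    linear_combination C (normConst q 0) * (hrec + hlow) - derivative^[q] (legendre (q + 1)) * hA
  | succ i =>
    have hB := congrArg C (jacobiCoeff_succ_mul_normConst q i)
    simp only [map_mul, map_add, map_natCast, map_ofNat, map_one] at hB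
    simp only [Nat.add_sub_cancel, show i + 1 + q - 1 = i + q by omega] at hrec ⊢
    push_cast at hrec hA hB ⊢
    linear_combination C (normConst q (i + 1)) * hrec -
      derivative^[q] (legendre (i + 1 + q + 1)) * hA - derivative^[q] (legendre (i + q)) * hB

theorem assocLegendreSq_zero (n : ℕ) : assocLegendreSq n 0 = legendre n ^ 2 := by
  simp [assocLegendreSq]

theorem one_sub_sq_pow_mul_eval_orthonormalGegenbauer_sq {k n : ℕ} (hk : k ≤ n) (x : ℝ) :
    (1 - x ^ 2) ^ k * (orthonormalGegenbauer k (n - k)).eval x ^ 2 =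
      (2 * n + 1) / 2 * (legendreWeight n k * (assocLegendreSq n k).eval x) := by
  rw [orthonormalGegenbauer, eval_mul, eval_C, mul_pow, normConst_sq, Nat.sub_add_cancel hk,
    assocLegendreSq, eval_mul, eval_pow, eval_pow, eval_sub, eval_one, eval_pow, eval_X]
  ring

theorem stmt15
    (cb : ℕ → ℕ → ℝ)
    (hcb : ∀ q j : ℕ, cb q j = (1/2) * Real.sqrt
      (((j:ℝ) * ((j:ℝ) + 2*(q:ℝ))) /
        (((j:ℝ) + (q:ℝ) - 1/2) * ((j:ℝ) + (q:ℝ) + 1/2))))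
    (p : ℕ → ℕ → Polynomial ℝ)
    (hp0 : ∀ q : ℕ, p q 0 =
      Polynomial.C (1 / Real.sqrt (∫ x in (-1:ℝ)..1, (1 - x^2)^q)))
    (hrec : ∀ q j : ℕ, Polynomial.X * p q j =
      Polynomial.C (cb q (j+1)) * p q (j+1) + Polynomial.C (cb q j) * p q (j-1)) :
    ∀ n : ℕ, ∀ x ∈ Set.Icc (-1:ℝ) 1,
      (2*(n:ℝ)+1)/2 = ((p 0 n).eval x)^2 +
        2 * ∑ k ∈ Finset.Icc 1 n, (1 - x^2)^k * ((p k (n-k)).eval x)^2 := by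
  obtain rfl : cb = jacobiCoeff := funext fun q => funext (hcb q)
  obtain rfl : p = orthonormalGegenbauer := funext fun q =>
    eq_of_three_term_recurrence (fun j => (jacobiCoeff_succ_pos q j).ne') (hrec q)
      (X_mul_orthonormalGegenbauer q) (by rw [hp0, orthonormalGegenbauer_zero])
  intro n x _
  have hsum := congrArg (eval x) (legendre_sq_add_two_mul_sum_assocLegendreSq_eq_one n)
  have hhead := one_sub_sq_pow_mul_eval_orthonormalGegenbauer_sq (Nat.zero_le n) x
  simp only [eval_add, eval_mul, eval_pow, eval_finsetSum, eval_C, eval_ofNat, eval_one] at hsum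
  simp only [pow_zero, one_mul, Nat.sub_zero, legendreWeight_zero, assocLegendreSq_zero,
    eval_pow] at hhead
  rw [hhead, Finset.sum_congr rfl fun k hk =>
    one_sub_sq_pow_mul_eval_orthonormalGegenbauer_sq (Finset.mem_Icc.mp hk).2 x, ← Finset.mul_sum]
  linear_combination (-(2 * (n : ℝ) + 1) / 2) * hsum
end
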